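/- arXiv:1803.02679 — 13 statements merged into one kernel-verified Lean document; each statement's English description precedes it below -/
import Mathlib

section
/- Theorem 3.1: The inner product is zero for two states with different level; that is, if L₁ and L₂ are lists over Fin r with L₁.length ≠ L₂.length, then ⟪v(L₁), v(L₂)⟫ = 0. -/
/-!
Every state `v(L)` is a weight vector, so each `H i` preserves the span of the states of a
given level. The commutator relation `[E⁺ i, E⁻ j] = δᵢⱼ H i` together with `E⁺ i Λ = 0` then
shows that `E⁺ i` lowers the level by one and kills level zero. Since `E⁺ i` is adjoint to
`E⁻ i`, moving one `E⁻` across the inner product lowers both levels by one; after finitely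
many steps one side reaches level zero while the other does not, and the inner product vanishes.
-/

namespace HighestWeight

section Algebra

variable {R V ι : Type*} [CommRing R] [AddCommGroup V] [Module R V]
  (Em : ι → V →ₗ[R] V) (Λ : V)

def state (L : List ι) : V :=
  L.foldr (fun j y => Em j y) Λ

@[simp]
theorem state_nil : state Em Λ [] = Λ :=
  rfl

@[simp]
theorem state_cons (j : ι) (L : List ι) : state Em Λ (j :: L) = Em j (state Em Λ L) :=
  rfl

def levelSpan (n : ℕ) : Submodule R V :=
  Submodule.span R (state Em Λ '' {L | L.length = n})

theorem state_mem_levelSpan (L : List ι) : state Em Λ L ∈ levelSpan Em Λ L.length :=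
  Submodule.subset_span ⟨L, rfl, rfl⟩

theorem map_levelSpan_le_succ (j : ι) (n : ℕ) :
    (levelSpan Em Λ n).map (Em j) ≤ levelSpan Em Λ (n + 1) := by
  rw [levelSpan, Submodule.map_span_le, Set.forall_mem_image]
  rintro L rfl
  exact state_mem_levelSpan Em Λ (j :: L)

variable {Em Λ} {H : ι → V →ₗ[R] V} {α : ι → ι → R} {μ : ι → R}

theorem apply_state_eq_smul (hHEm : ∀ i j, H i ∘ₗ Em j - Em j ∘ₗ H i = α i j • Em j)
    (hHΛ : ∀ i, H i Λ = μ i • Λ) (i : ι) (L : List ι) :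
    H i (state Em Λ L) = (μ i + (L.map (α i)).sum) • state Em Λ L := by
  induction L with
  | nil => simpa using hHΛ i
  | cons j T ih =>
    have hcomm : H i (Em j (state Em Λ T)) =
        Em j (H i (state Em Λ T)) + α i j • Em j (state Em Λ T) := by
      rw [← LinearMap.smul_apply, ← hHEm i j]
      simp
    rw [state_cons, hcomm, ih, map_smul, List.map_cons, List.sum_cons]
    module

theorem map_levelSpan_le (hHEm : ∀ i j, H i ∘ₗ Em j - Em j ∘ₗ H i = α i j • Em j)
    (hHΛ : ∀ i, H i Λ = μ i • Λ) (i : ι) (n : ℕ) :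
    (levelSpan Em Λ n).map (H i) ≤ levelSpan Em Λ n := by
  rw [levelSpan, Submodule.map_span_le, Set.forall_mem_image]
  rintro L rfl
  rw [apply_state_eq_smul hHEm hHΛ]
  exact Submodule.smul_mem _ _ (state_mem_levelSpan Em Λ L)

variable {Ep : ι → V →ₗ[R] V}

theorem map_levelSpan_zero (hEpΛ : ∀ i, Ep i Λ = 0) (i : ι) :
    (levelSpan Em Λ 0).map (Ep i) = ⊥ := by
  rw [eq_bot_iff, levelSpan, Submodule.map_span_le, Set.forall_mem_image]
  rintro L hL
  rw [List.length_eq_zero_iff.mp hL, state_nil, hEpΛ]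
  exact Submodule.zero_mem _

variable [DecidableEq ι]

theorem map_levelSpan_succ_le_of_map_map_le
    (hEpEm : ∀ i j, Ep i ∘ₗ Em j - Em j ∘ₗ Ep i = if i = j then H i else 0)
    (hHEm : ∀ i j, H i ∘ₗ Em j - Em j ∘ₗ H i = α i j • Em j) (hHΛ : ∀ i, H i Λ = μ i • Λ)
    {i : ι} {n : ℕ}
    (hEmEp : ∀ j, ((levelSpan Em Λ n).map (Ep i)).map (Em j) ≤ levelSpan Em Λ n) :
    (levelSpan Em Λ (n + 1)).map (Ep i) ≤ levelSpan Em Λ n := by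
  rw [levelSpan, Submodule.map_span_le, Set.forall_mem_image]
  rintro (_ | ⟨j, T⟩) hL
  · simp at hL
  obtain rfl : T.length = n := Nat.succ_injective hL
  have hcomm : Ep i (Em j (state Em Λ T)) =
      Em j (Ep i (state Em Λ T)) + (if i = j then H i else 0) (state Em Λ T) := by
    rw [← hEpEm i j]
    simp
  rw [state_cons, hcomm]
  refine Submodule.add_mem _ (hEmEp j ⟨_, ⟨_, state_mem_levelSpan Em Λ T, rfl⟩, rfl⟩) ?_
  split_ifs
  · exact map_levelSpan_le hHEm hHΛ i _ ⟨_, state_mem_levelSpan Em Λ T, rfl⟩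
  · exact Submodule.zero_mem _

theorem map_levelSpan_succ_le
    (hEpEm : ∀ i j, Ep i ∘ₗ Em j - Em j ∘ₗ Ep i = if i = j then H i else 0)
    (hHEm : ∀ i j, H i ∘ₗ Em j - Em j ∘ₗ H i = α i j • Em j) (hHΛ : ∀ i, H i Λ = μ i • Λ)
    (hEpΛ : ∀ i, Ep i Λ = 0) (i : ι) (n : ℕ) :
    (levelSpan Em Λ (n + 1)).map (Ep i) ≤ levelSpan Em Λ n := by
  induction n with
  | zero =>
    refine map_levelSpan_succ_le_of_map_map_le hEpEm hHEm hHΛ fun j => ?_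
    rw [map_levelSpan_zero hEpΛ, Submodule.map_bot]
    exact bot_le
  | succ n ih =>
    exact map_levelSpan_succ_le_of_map_map_le hEpEm hHEm hHΛ fun j =>
      (Submodule.map_mono ih).trans (map_levelSpan_le_succ Em Λ j n)

end Algebra

section Orthogonality

variable {𝕜 V ι : Type*} [RCLike 𝕜] [NormedAddCommGroup V] [InnerProductSpace 𝕜 V]
  {Ep Em : ι → V →ₗ[𝕜] V} {Λ : V}

theorem isOrtho_levelSpan_succ (hadj : ∀ i x y, inner 𝕜 (Ep i x) y = inner 𝕜 x (Em i y))
    {N : Submodule 𝕜 V} {n : ℕ} (hN : ∀ j, N.map (Ep j) ⟂ levelSpan Em Λ n) :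
    N ⟂ levelSpan Em Λ (n + 1) := by
  rw [Submodule.isOrtho_comm, Submodule.isOrtho_iff_le, levelSpan, Submodule.span_le]
  rintro _ ⟨_ | ⟨j, T⟩, hL, rfl⟩
  · simp at hL
  obtain rfl : T.length = n := Nat.succ_injective hL
  refine (Submodule.mem_orthogonal _ _).mpr fun x hx => ?_
  rw [state_cons, ← hadj]
  exact (hN j).inner_eq ⟨x, hx, rfl⟩ (state_mem_levelSpan Em Λ T)

theorem levelSpan_isOrtho (hadj : ∀ i x y, inner 𝕜 (Ep i x) y = inner 𝕜 x (Em i y))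
    (hEp_zero : ∀ i, (levelSpan Em Λ 0).map (Ep i) = ⊥)
    (hEp_succ : ∀ i n, (levelSpan Em Λ (n + 1)).map (Ep i) ≤ levelSpan Em Λ n) :
    ∀ {m n : ℕ}, m ≠ n → levelSpan Em Λ m ⟂ levelSpan Em Λ n := by
  have hzero (n : ℕ) : levelSpan Em Λ 0 ⟂ levelSpan Em Λ (n + 1) :=
    isOrtho_levelSpan_succ hadj fun j => hEp_zero j ▸ Submodule.isOrtho_bot_left
  intro m
  induction m with
  | zero =>
    rintro (_ | n) h
    · exact absurd rfl h
    · exact hzero n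
  | succ m ih =>
    rintro (_ | n) h
    · exact (hzero m).symm
    · exact isOrtho_levelSpan_succ hadj fun j =>
        (ih (by omega)).mono_left (hEp_succ j m)

end Orthogonality

end HighestWeight

open HighestWeight in
theorem stmt0_general {r : ℕ} (A : Fin r → Fin r → ℤ)
    {V : Type*} [NormedAddCommGroup V] [InnerProductSpace ℂ V]
    (Ep Em H : Fin r → (V →ₗ[ℂ] V))
    (hEpEm : ∀ i j, Ep i ∘ₗ Em j - Em j ∘ₗ Ep i = if i = j then H i else 0)
    (hHEm : ∀ i j, H i ∘ₗ Em j - Em j ∘ₗ H i = (-(A j i) : ℂ) • Em j)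
    (hadj : ∀ i (x y : V), (inner ℂ (Ep i x) y : ℂ) = inner ℂ x (Em i y))
    (lam : Fin r → ℤ) (Λ : V)
    (hEpΛ : ∀ i, Ep i Λ = 0)
    (hHΛ : ∀ i, H i Λ = (lam i : ℂ) • Λ)
    (L₁ L₂ : List (Fin r)) (hlen : L₁.length ≠ L₂.length) :
    (inner ℂ (L₁.foldr (fun j y => Em j y) Λ) (L₂.foldr (fun j y => Em j y) Λ) : ℂ) = 0 :=
  (levelSpan_isOrtho hadj (map_levelSpan_zero hEpΛ) (map_levelSpan_succ_le hEpEm hHEm hHΛ hEpΛ)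
    hlen).inner_eq (state_mem_levelSpan Em Λ L₁) (state_mem_levelSpan Em Λ L₂)

theorem stmt0 {r : ℕ} (A : Fin r → Fin r → ℤ) (hA : ∀ i, A i i = 2)
    {V : Type*} [NormedAddCommGroup V] [InnerProductSpace ℂ V]
    (Ep Em H : Fin r → (V →ₗ[ℂ] V))
    (hEpEm : ∀ i j, Ep i ∘ₗ Em j - Em j ∘ₗ Ep i = if i = j then H i else 0)
    (hHEp : ∀ i j, H i ∘ₗ Ep j - Ep j ∘ₗ H i = (A j i : ℂ) • Ep j)
    (hHEm : ∀ i j, H i ∘ₗ Em j - Em j ∘ₗ H i = (-(A j i) : ℂ) • Em j)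
    (hHH : ∀ i j, H i ∘ₗ H j - H j ∘ₗ H i = 0)
    (hadj : ∀ i (x y : V), (inner ℂ (Ep i x) y : ℂ) = inner ℂ x (Em i y))
    (lam : Fin r → ℤ) (Λ : V)
    (hΛnorm : (inner ℂ Λ Λ : ℂ) = 1)
    (hEpΛ : ∀ i, Ep i Λ = 0)
    (hHΛ : ∀ i, H i Λ = (lam i : ℂ) • Λ)
    (L₁ L₂ : List (Fin r)) (hlen : L₁.length ≠ L₂.length) :
    (inner ℂ (L₁.foldr (fun j y => Em j y) Λ) (L₂.foldr (fun j y => Em j y) Λ) : ℂ) = 0 :=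
  stmt0_general A Ep Em H hEpEm hHEm hadj lam Λ hEpΛ hHΛ L₁ L₂ hlen
end

section
/- Theorem 3.2: The inner product is zero for different states with the same level; that is, if L₁ and L₂ are lists over Fin r of equal length whose underlying multisets of entries are different, then ⟪v(L₁), v(L₂)⟫ = 0. -/
/-!
Moving a raising operator `E⁺ i` to the right through a word `E⁻ j₁ ⋯ E⁻ jₙ Λ` only ever
replaces an `E⁻ i` by a Cartan element, which acts on the shorter word by a scalar, and finally
kills `Λ`. Hence `E⁺ i v(L)` is a combination of words `v(L')` with `i ::ₘ L' = L`. By adjointness,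
`⟪v(i :: L₁), v(L₂)⟫ = ⟪v(L₁), E⁺ i v(L₂)⟫`, and induction on `L₁` shows that two words are
orthogonal as soon as their letter multisets differ.
-/

section LowerWord

variable {ι R M : Type*} [CommRing R] [AddCommGroup M] [Module R M]

def lowerWord (Em : ι → M →ₗ[R] M) (Λ : M) (L : List ι) : M :=
  L.foldr (fun j y => Em j y) Λ

variable (Em : ι → M →ₗ[R] M) (Λ : M)

@[simp]
lemma lowerWord_nil : lowerWord Em Λ [] = Λ := rfl

@[simp]
lemma lowerWord_cons (j : ι) (L : List ι) :
    lowerWord Em Λ (j :: L) = Em j (lowerWord Em Λ L) := rfl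

lemma cartan_lowerWord {H : ι → M →ₗ[R] M} {a : ι → ι → R} {μ : ι → R}
    (hHEm : ∀ i j, H i ∘ₗ Em j - Em j ∘ₗ H i = a j i • Em j)
    (hHΛ : ∀ i, H i Λ = μ i • Λ) (i : ι) (L : List ι) :
    H i (lowerWord Em Λ L) = (μ i + (L.map (a · i)).sum) • lowerWord Em Λ L := by
  induction L with
  | nil => simpa using hHΛ i
  | cons j L ih =>
    have hcomm : H i (Em j (lowerWord Em Λ L)) =
        a j i • Em j (lowerWord Em Λ L) + Em j (H i (lowerWord Em Λ L)) :=
      eq_add_of_sub_eq (LinearMap.congr_fun (hHEm i j) _)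
    rw [lowerWord_cons, hcomm, ih, map_smul, List.map_cons, List.sum_cons]
    module

lemma raise_lowerWord_mem_span [DecidableEq ι] {Ep H : ι → M →ₗ[R] M} {a : ι → ι → R}
    {μ : ι → R}
    (hEpEm : ∀ i j, Ep i ∘ₗ Em j - Em j ∘ₗ Ep i = if i = j then H i else 0)
    (hHEm : ∀ i j, H i ∘ₗ Em j - Em j ∘ₗ H i = a j i • Em j)
    (hEpΛ : ∀ i, Ep i Λ = 0) (hHΛ : ∀ i, H i Λ = μ i • Λ) (i : ι) (L : List ι) :
    Ep i (lowerWord Em Λ L) ∈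
      Submodule.span R (lowerWord Em Λ '' {L' | i ::ₘ (L' : Multiset ι) = L}) := by
  induction L with
  | nil => simp [hEpΛ]
  | cons j L ih =>
    have hcomm : Ep i (Em j (lowerWord Em Λ L)) =
        (if i = j then H i else 0) (lowerWord Em Λ L) + Em j (Ep i (lowerWord Em Λ L)) :=
      eq_add_of_sub_eq (LinearMap.congr_fun (hEpEm i j) _)
    rw [lowerWord_cons, hcomm]
    refine Submodule.add_mem _ ?_ ?_
    · split_ifs with hij
      · subst hij
        rw [cartan_lowerWord Em Λ hHEm hHΛ]
        exact Submodule.smul_mem _ _ (Submodule.subset_span ⟨L, rfl, rfl⟩)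
      · exact Submodule.zero_mem _
    · have hmap := Submodule.mem_map_of_mem (f := Em j) ih
      rw [Submodule.map_span, ← Set.image_comp] at hmap
      refine Submodule.span_mono ?_ hmap
      rintro _ ⟨L', hL', rfl⟩
      refine ⟨j :: L', ?_, rfl⟩
      rw [Set.mem_ofPred_eq] at hL' ⊢
      rw [← Multiset.cons_coe, ← Multiset.cons_coe, Multiset.cons_swap, hL']

end LowerWord

theorem stmt1_general {r : ℕ} (A : Fin r → Fin r → ℤ)
    {V : Type*} [NormedAddCommGroup V] [InnerProductSpace ℂ V]
    (Ep Em H : Fin r → (V →ₗ[ℂ] V))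
    (hEpEm : ∀ i j, Ep i ∘ₗ Em j - Em j ∘ₗ Ep i = if i = j then H i else 0)
    (hHEm : ∀ i j, H i ∘ₗ Em j - Em j ∘ₗ H i = (-(A j i) : ℂ) • Em j)
    (hadj : ∀ i (x y : V), (inner ℂ (Ep i x) y : ℂ) = inner ℂ x (Em i y))
    (lam : Fin r → ℤ) (Λ : V)
    (hEpΛ : ∀ i, Ep i Λ = 0)
    (hHΛ : ∀ i, H i Λ = (lam i : ℂ) • Λ)
    (L₁ L₂ : List (Fin r)) (hlen : L₁.length = L₂.length)
    (hmult : (L₁ : Multiset (Fin r)) ≠ (L₂ : Multiset (Fin r))) :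
    (inner ℂ (L₁.foldr (fun j y => Em j y) Λ) (L₂.foldr (fun j y => Em j y) Λ) : ℂ) = 0 := by
  change inner ℂ (lowerWord Em Λ L₁) (lowerWord Em Λ L₂) = (0 : ℂ)
  induction L₁ generalizing L₂ with
  | nil => exact absurd (List.eq_nil_of_length_eq_zero hlen.symm ▸ rfl) hmult
  | cons i L₁ ih =>
    rw [lowerWord_cons, ← inner_conj_symm, ← hadj, inner_conj_symm]
    have hspan := raise_lowerWord_mem_span Em Λ hEpEm hHEm hEpΛ hHΛ i L₂
    suffices hS : lowerWord Em Λ '' {L' | i ::ₘ (L' : Multiset (Fin r)) = L₂} ⊆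
        (ℂ ∙ lowerWord Em Λ L₁)ᗮ from
      Submodule.mem_orthogonal_singleton_iff_inner_right.mp (Submodule.span_le.mpr hS hspan)
    rintro _ ⟨L', hL', rfl⟩
    rw [Set.mem_ofPred_eq] at hL'
    have hcard := congrArg Multiset.card hL'
    simp only [Multiset.card_cons, Multiset.coe_card, List.length_cons] at hcard hlen
    refine Submodule.mem_orthogonal_singleton_iff_inner_right.mpr (ih L' (by omega) fun h => ?_)
    exact hmult (by rw [← Multiset.cons_coe, h, hL'])

theorem stmt1 {r : ℕ} (A : Fin r → Fin r → ℤ) (hA : ∀ i, A i i = 2)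
    {V : Type*} [NormedAddCommGroup V] [InnerProductSpace ℂ V]
    (Ep Em H : Fin r → (V →ₗ[ℂ] V))
    (hEpEm : ∀ i j, Ep i ∘ₗ Em j - Em j ∘ₗ Ep i = if i = j then H i else 0)
    (hHEp : ∀ i j, H i ∘ₗ Ep j - Ep j ∘ₗ H i = (A j i : ℂ) • Ep j)
    (hHEm : ∀ i j, H i ∘ₗ Em j - Em j ∘ₗ H i = (-(A j i) : ℂ) • Em j)
    (hHH : ∀ i j, H i ∘ₗ H j - H j ∘ₗ H i = 0)
    (hadj : ∀ i (x y : V), (inner ℂ (Ep i x) y : ℂ) = inner ℂ x (Em i y))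
    (lam : Fin r → ℤ) (Λ : V)
    (hΛnorm : (inner ℂ Λ Λ : ℂ) = 1)
    (hEpΛ : ∀ i, Ep i Λ = 0)
    (hHΛ : ∀ i, H i Λ = (lam i : ℂ) • Λ)
    (L₁ L₂ : List (Fin r)) (hlen : L₁.length = L₂.length)
    (hmult : (L₁ : Multiset (Fin r)) ≠ (L₂ : Multiset (Fin r))) :
    (inner ℂ (L₁.foldr (fun j y => Em j y) Λ) (L₂.foldr (fun j y => Em j y) Λ) : ℂ) = 0 :=
  stmt1_general A Ep Em H hEpEm hHEm hadj lam Λ hEpΛ hHΛ L₁ L₂ hlen hmult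
end

section
/- Equation (le0): For every index a ∈ Fin r and every list L = [i₁, …, i_n] over Fin r, one has E⁺ a (v(L)) = Σ_{k : i_k = a} (λ a − Σ_{l = k+1}^{n} A (i_l) a : ℂ) • v(L with the k-th entry deleted), where the sum runs over all positions k of L whose entry equals a, and for each such position the coefficient subtracts A (i_l) a over all entries i_l that are applied to Λ before position k (i.e. over l > k). -/
/-!
Moving `E⁺ a` to the right through `v(L)` one lowering operator at a time, each occurrence of
`E⁻ a` at position `k` leaves `H a` applied to the tail `v([i_{k+1}, …, i_n])`, and `E⁺ a Λ = 0`.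
Since `[H a, E⁻ j] = -A j a • E⁻ j`, that tail is an `H a`-eigenvector with eigenvalue
`λ a - Σ_{l > k} A (i_l) a`.
-/

theorem List.sum_ite_lt_get_eq_sum_map_drop {ι M : Type*} [AddCommMonoid M] (f : ι → M) :
    ∀ (L : List ι) (k : ℕ),
      ∑ l : Fin L.length, (if k < (l : ℕ) then f (L.get l) else 0) =
        ((L.drop (k + 1)).map f).sum
  | [], _ => by simp
  | j :: L, 0 => by simp [Fin.sum_univ_succ]
  | j :: L, k + 1 => by
    simp only [List.length_cons]
    rw [Fin.sum_univ_succ]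
    simpa using List.sum_ite_lt_get_eq_sum_map_drop f L k

section LoweringWords

variable {ι R V : Type*} [CommRing R] [AddCommGroup V] [Module R V]
  (E : ι → V →ₗ[R] V) (Λ : V)

def wordVector (L : List ι) : V := L.foldr (fun j y => E j y) Λ

@[simp]
theorem wordVector_nil : wordVector E Λ [] = Λ := rfl

@[simp]
theorem wordVector_cons (j : ι) (L : List ι) :
    wordVector E Λ (j :: L) = E j (wordVector E Λ L) := rfl

variable {E}

theorem apply_wordVector_cons_of_commutator {X C : V →ₗ[R] V} {j : ι}
    (h : X ∘ₗ E j - E j ∘ₗ X = C) (L : List ι) :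
    X (wordVector E Λ (j :: L)) = E j (X (wordVector E Λ L)) + C (wordVector E Λ L) := by
  rw [← h]
  simp

theorem apply_wordVector_eq_smul_of_weight {H : ι → V →ₗ[R] V} {μ : ι → R} {α : ι → ι → R}
    (hHE : ∀ i j, H i ∘ₗ E j - E j ∘ₗ H i = -α j i • E j) (hHΛ : ∀ i, H i Λ = μ i • Λ)
    (i : ι) : ∀ L : List ι,
      H i (wordVector E Λ L) = (μ i - (L.map (α · i)).sum) • wordVector E Λ L
  | [] => by simp [hHΛ]
  | j :: L => by
    rw [apply_wordVector_cons_of_commutator Λ (hHE i j),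
      apply_wordVector_eq_smul_of_weight hHE hHΛ i L]
    simp only [map_smul, LinearMap.smul_apply, wordVector_cons, ← add_smul, List.map_cons,
      List.sum_cons]
    ring_nf

theorem apply_wordVector_eq_sum_eraseIdx [DecidableEq ι] {Ep H : ι → V →ₗ[R] V}
    {μ : ι → R} {α : ι → ι → R}
    (hEpE : ∀ i j, Ep i ∘ₗ E j - E j ∘ₗ Ep i = if i = j then H i else 0)
    (hHE : ∀ i j, H i ∘ₗ E j - E j ∘ₗ H i = -α j i • E j)
    (hEpΛ : ∀ i, Ep i Λ = 0) (hHΛ : ∀ i, H i Λ = μ i • Λ) (a : ι) :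
    ∀ L : List ι, Ep a (wordVector E Λ L) =
      ∑ k : Fin L.length, if L.get k = a then
        (μ a - ((L.drop (k + 1)).map (α · a)).sum) • wordVector E Λ (L.eraseIdx k) else 0
  | [] => by simp [hEpΛ]
  | j :: L => by
    rw [apply_wordVector_cons_of_commutator Λ (hEpE a j),
      apply_wordVector_eq_sum_eraseIdx hEpE hHE hEpΛ hHΛ a L, map_sum, add_comm]
    simp only [List.length_cons]
    rw [Fin.sum_univ_succ]
    congr 1
    · by_cases h : a = j
      · subst h
        simp [apply_wordVector_eq_smul_of_weight Λ hHE hHΛ]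
      · simp [h, Ne.symm h]
    · refine Finset.sum_congr rfl fun k _ => ?_
      split_ifs <;> simp_all

end LoweringWords

theorem stmt2_general {r : ℕ} (A : Fin r → Fin r → ℤ)
    {V : Type*} [NormedAddCommGroup V] [InnerProductSpace ℂ V]
    (Ep Em H : Fin r → (V →ₗ[ℂ] V))
    (hEpEm : ∀ i j, Ep i ∘ₗ Em j - Em j ∘ₗ Ep i = if i = j then H i else 0)
    (hHEm : ∀ i j, H i ∘ₗ Em j - Em j ∘ₗ H i = (-(A j i) : ℂ) • Em j)
    (lam : Fin r → ℤ) (Λ : V)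
    (hEpΛ : ∀ i, Ep i Λ = 0)
    (hHΛ : ∀ i, H i Λ = (lam i : ℂ) • Λ)
    (a : Fin r) (L : List (Fin r)) :
    Ep a (L.foldr (fun j y => Em j y) Λ) =
      ∑ k : Fin L.length,
        if L.get k = a then
          (((lam a : ℂ) -
              ∑ l : Fin L.length, if (k : ℕ) < (l : ℕ) then (A (L.get l) a : ℂ) else 0)) •
            ((L.eraseIdx (k : ℕ)).foldr (fun j y => Em j y) Λ)
        else 0 := by
  simp only [List.sum_ite_lt_get_eq_sum_map_drop (fun j => (A j a : ℂ))]
  exact apply_wordVector_eq_sum_eraseIdx Λ hEpEm hHEm hEpΛ hHΛ a L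

theorem stmt2 {r : ℕ} (A : Fin r → Fin r → ℤ) (hA : ∀ i, A i i = 2)
    {V : Type*} [NormedAddCommGroup V] [InnerProductSpace ℂ V]
    (Ep Em H : Fin r → (V →ₗ[ℂ] V))
    (hEpEm : ∀ i j, Ep i ∘ₗ Em j - Em j ∘ₗ Ep i = if i = j then H i else 0)
    (hHEp : ∀ i j, H i ∘ₗ Ep j - Ep j ∘ₗ H i = (A j i : ℂ) • Ep j)
    (hHEm : ∀ i j, H i ∘ₗ Em j - Em j ∘ₗ H i = (-(A j i) : ℂ) • Em j)
    (hHH : ∀ i j, H i ∘ₗ H j - H j ∘ₗ H i = 0)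
    (hadj : ∀ i (x y : V), (inner ℂ (Ep i x) y : ℂ) = inner ℂ x (Em i y))
    (lam : Fin r → ℤ) (Λ : V)
    (hΛnorm : (inner ℂ Λ Λ : ℂ) = 1)
    (hEpΛ : ∀ i, Ep i Λ = 0)
    (hHΛ : ∀ i, H i Λ = (lam i : ℂ) • Λ)
    (a : Fin r) (L : List (Fin r)) :
    Ep a (L.foldr (fun j y => Em j y) Λ) =
      ∑ k : Fin L.length,
        if L.get k = a then
          (((lam a : ℂ) -
              ∑ l : Fin L.length, if (k : ℕ) < (l : ℕ) then (A (L.get l) a : ℂ) else 0)) •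
            ((L.eraseIdx (k : ℕ)).foldr (fun j y => Em j y) Λ)
        else 0 :=
  stmt2_general A Ep Em H hEpEm hHEm lam Λ hEpΛ hHΛ a L
end

section
/- Proposition 3.3: For every index i ∈ Fin r, every list J = [j₁, …, j_m] over Fin r, and every n ≥ 1, one has E⁺ i ((E⁻ i)^n (v(J))) = (n (λ i − (n − 1) − Σ_{b=1}^{m} A (j_b) i) : ℂ) • ((E⁻ i)^{n−1} (v(J))) + (E⁻ i)^n (E⁺ i (v(J))), where (E⁻ i)^n denotes the n-fold composition of E⁻ i. -/
/-!
Since `[H i, E⁻ j] = -A j i • E⁻ j`, each lowering operator shifts `H i`-eigenvalues: `v(J)` is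
an `H i`-eigenvector with eigenvalue `μ = λ i - Σ_b A j_b i`, and `(E⁻ i)^k v(J)` one with
eigenvalue `μ - 2k` (as `A i i = 2`). Moving `E⁺ i` past the `n` factors of `E⁻ i` with
`[E⁺ i, E⁻ i] = H i` then produces the sum of these eigenvalues, `Σ_{k<n} (μ - 2k) = n (μ - (n - 1))`.
-/

namespace Module.End

variable {R M : Type*} [CommRing R] [AddCommGroup M] [Module R M]

theorem shift_apply_of_apply_eq_smul {h f : Module.End R M} {c μ : R}
    (hhf : h ∘ₗ f - f ∘ₗ h = c • f) {x : M} (hx : h x = μ • x) :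
    h (f x) = (μ + c) • f x := by
  have hfx := LinearMap.congr_fun hhf x
  simp only [LinearMap.sub_apply, LinearMap.comp_apply, LinearMap.smul_apply, hx,
    map_smul] at hfx
  rw [add_smul, ← hfx]
  abel

theorem shift_pow_apply_of_apply_eq_smul {h f : Module.End R M} {c μ : R}
    (hhf : h ∘ₗ f - f ∘ₗ h = c • f) {x : M} (hx : h x = μ • x) (k : ℕ) :
    h ((f ^ k) x) = (μ + k * c) • (f ^ k) x := by
  induction k with
  | zero => simpa using hx
  | succ k ih =>
    rw [pow_succ', mul_apply, shift_apply_of_apply_eq_smul hhf ih]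
    push_cast
    congr 1
    ring

theorem shift_foldr_apply_of_apply_eq_smul {ι : Type*} {h : Module.End R M}
    {f : ι → Module.End R M} {c : ι → R} (hhf : ∀ j, h ∘ₗ f j - f j ∘ₗ h = -c j • f j)
    {x : M} {μ : R} (hx : h x = μ • x) (J : List ι) :
    h (J.foldr (fun j y => f j y) x) = (μ - (J.map c).sum) • J.foldr (fun j y => f j y) x := by
  induction J with
  | nil => simpa using hx
  | cons j J ih =>
    rw [List.foldr_cons, shift_apply_of_apply_eq_smul (hhf j) ih, List.map_cons, List.sum_cons]
    congr 1
    ring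

section SlTwo

variable {e f h : Module.End R M} (hef : e ∘ₗ f - f ∘ₗ e = h)
  (hhf : h ∘ₗ f - f ∘ₗ h = (-2 : R) • f) {w : M} {μ : R} (hw : h w = μ • w)
include hef hhf hw

theorem raising_apply_lowering_pow_succ_apply (m : ℕ) :
    e ((f ^ (m + 1)) w) = ((m + 1) * (μ - m)) • (f ^ m) w + (f ^ (m + 1)) (e w) := by
  have hcomm (x : M) : e (f x) = f (e x) + h x := by
    rw [← hef]
    simp
  induction m with
  | zero => simp [hcomm, hw, add_comm]
  | succ m ih =>
    rw [pow_succ' f (m + 1), mul_apply, hcomm, ih, shift_pow_apply_of_apply_eq_smul hhf hw,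
      map_add, map_smul, ← mul_apply, ← pow_succ', ← mul_apply f, ← pow_succ']
    push_cast
    module

theorem raising_apply_lowering_pow_apply (n : ℕ) :
    e ((f ^ n) w) = (n * (μ - (n - 1))) • (f ^ (n - 1)) w + (f ^ n) (e w) := by
  cases n with
  | zero => simp
  | succ m =>
    rw [raising_apply_lowering_pow_succ_apply hef hhf hw, Nat.add_sub_cancel]
    push_cast
    congr 2
    ring

end SlTwo

end Module.End

open Module.End in
theorem stmt5_general {r : ℕ} (A : Fin r → Fin r → ℤ) (hA : ∀ i, A i i = 2)
    {V : Type*} [NormedAddCommGroup V] [InnerProductSpace ℂ V]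
    (Ep Em H : Fin r → (V →ₗ[ℂ] V))
    (hEpEm : ∀ i j, Ep i ∘ₗ Em j - Em j ∘ₗ Ep i = if i = j then H i else 0)
    (hHEm : ∀ i j, H i ∘ₗ Em j - Em j ∘ₗ H i = (-(A j i) : ℂ) • Em j)
    (lam : Fin r → ℤ) (Λ : V)
    (hHΛ : ∀ i, H i Λ = (lam i : ℂ) • Λ)
    (i : Fin r) (J : List (Fin r)) (n : ℕ) :
    Ep i ((Em i ^ n) (J.foldr (fun j y => Em j y) Λ)) =
      (((n : ℤ) * (lam i - ((n : ℤ) - 1) - (J.map (fun j => A j i)).sum) : ℤ) : ℂ) •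
        ((Em i ^ (n - 1)) (J.foldr (fun j y => Em j y) Λ)) +
      (Em i ^ n) (Ep i (J.foldr (fun j y => Em j y) Λ)) := by
  have hef : Ep i ∘ₗ Em i - Em i ∘ₗ Ep i = H i := by simpa using hEpEm i i
  have hhf : H i ∘ₗ Em i - Em i ∘ₗ H i = (-2 : ℂ) • Em i := by simpa [hA] using hHEm i i
  have hvJ := shift_foldr_apply_of_apply_eq_smul (hHEm i) (hHΛ i) J
  rw [raising_apply_lowering_pow_apply hef hhf hvJ n]
  push_cast [List.map_map, Function.comp_def]
  congr 2
  ring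

theorem stmt5 {r : ℕ} (A : Fin r → Fin r → ℤ) (hA : ∀ i, A i i = 2)
    {V : Type*} [NormedAddCommGroup V] [InnerProductSpace ℂ V]
    (Ep Em H : Fin r → (V →ₗ[ℂ] V))
    (hEpEm : ∀ i j, Ep i ∘ₗ Em j - Em j ∘ₗ Ep i = if i = j then H i else 0)
    (hHEp : ∀ i j, H i ∘ₗ Ep j - Ep j ∘ₗ H i = (A j i : ℂ) • Ep j)
    (hHEm : ∀ i j, H i ∘ₗ Em j - Em j ∘ₗ H i = (-(A j i) : ℂ) • Em j)
    (hHH : ∀ i j, H i ∘ₗ H j - H j ∘ₗ H i = 0)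
    (hadj : ∀ i (x y : V), (inner ℂ (Ep i x) y : ℂ) = inner ℂ x (Em i y))
    (lam : Fin r → ℤ) (Λ : V)
    (hΛnorm : (inner ℂ Λ Λ : ℂ) = 1)
    (hEpΛ : ∀ i, Ep i Λ = 0)
    (hHΛ : ∀ i, H i Λ = (lam i : ℂ) • Λ)
    (i : Fin r) (J : List (Fin r)) (n : ℕ) (hn : 1 ≤ n) :
    Ep i ((Em i ^ n) (J.foldr (fun j y => Em j y) Λ)) =
      (((n : ℤ) * (lam i - ((n : ℤ) - 1) - (J.map (fun j => A j i)).sum) : ℤ) : ℂ) •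
        ((Em i ^ (n - 1)) (J.foldr (fun j y => Em j y) Λ)) +
      (Em i ^ n) (Ep i (J.foldr (fun j y => Em j y) Λ)) :=
  stmt5_general A hA Ep Em H hEpEm hHEm lam Λ hHΛ i J n
end

section
/- Proposition 3.4: Fix i ∈ Fin r, a number of blocks l ≥ 1, lists J₁, …, J_{l+1} over Fin r all of whose entries are different from i, and exponents n₁, …, n_l ≥ 1. Define states from the bottom up: w_{l+1} := v(J_{l+1}), and for k = l, l−1, …, 1 let w_k be the result of applying (E⁻ i)^{n_k} to w_{k+1} and then applying E⁻ along the list J_k (rightmost entry first). For each k let c_k : ℤ be the H i–eigenvalue of w_{k+1}, namely c_k = λ i − Σ (A j i over all entries j of J_{k+1}, …, J_{l+1}) − 2 Σ_{b=k+1}^{l} n_b. Then E⁺ i (w₁) = Σ_{k=1}^{l} (n_k (c_k − (n_k − 1)) : ℂ) • w₁^{(k)}, where w₁^{(k)} denotes the state built in exactly the same way as w₁ but with the exponent n_k replaced by n_k − 1. -/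
/-!
`E⁺ i` commutes with every `E⁻ j` for `j ≠ i`, so it passes through the blocks `J_k` and only
meets the powers `(E⁻ i)^{n_k}`. On an `H i`-eigenvector `x` of weight `c` the `sl₂`-relations give
`E⁺ (E⁻)^n x = (E⁻)^n E⁺ x + n (c - n + 1) (E⁻)^{n-1} x`, and `H i`-weights drop by `A j i` under
each `E⁻ j`. Peeling off the outermost block and inducting on the number of blocks, with
`E⁺ i Λ = 0`, produces one term per block, with `c` the weight `c_k` of the state below it.
-/

noncomputable def chainApp {r : ℕ} {V : Type*} [AddCommGroup V] [Module ℂ V]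
    (Em : Fin r → (V →ₗ[ℂ] V)) (J : List (Fin r)) (x : V) : V :=
  J.foldr (fun j y => Em j y) x

noncomputable def buildState {r : ℕ} {V : Type*} [AddCommGroup V] [Module ℂ V]
    (Em : Fin r → (V →ₗ[ℂ] V)) (i : Fin r) (l : ℕ)
    (J : Fin (l + 1) → List (Fin r)) (Λ : V) (m : Fin l → ℕ) : V :=
  (List.finRange l).foldr
    (fun k x => chainApp Em (J k.castSucc) ((Em i ^ m k) x))
    (chainApp Em (J (Fin.last l)) Λ)

section Commutator

variable {R A : Type*} [CommRing R] [Ring A] [Algebra R A]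

theorem commutator_mul_eq_smul {h f g : A} {a b : R}
    (hf : h * f - f * h = a • f) (hg : h * g - g * h = b • g) :
    h * (f * g) - f * g * h = (a + b) • (f * g) := by
  calc h * (f * g) - f * g * h = (h * f - f * h) * g + f * (h * g - g * h) := by noncomm_ring
    _ = (a + b) • (f * g) := by rw [hf, hg, smul_mul_assoc, mul_smul_comm, add_smul]

theorem commutator_list_prod_eq_smul {ι : Type*} {h : A} {f : ι → A} {a : ι → R}
    (L : List ι) (hf : ∀ j ∈ L, h * f j - f j * h = a j • f j) :
    h * (L.map f).prod - (L.map f).prod * h = (L.map a).sum • (L.map f).prod := by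
  induction L with
  | nil => simp
  | cons j L ih =>
    simp only [List.forall_mem_cons] at hf
    simpa only [List.map_cons, List.prod_cons, List.sum_cons, mul_assoc]
      using commutator_mul_eq_smul hf.1 (ih hf.2)

theorem commutator_pow_eq_smul {h f : A} {a : R} (hf : h * f - f * h = a • f) (n : ℕ) :
    h * f ^ n - f ^ n * h = (n * a) • f ^ n := by
  induction n with
  | zero => simp
  | succ n ih =>
    rw [pow_succ, commutator_mul_eq_smul ih hf]
    push_cast
    module

end Commutator

section Eigenvector

variable {R M : Type*} [CommRing R] [AddCommGroup M] [Module R M]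

theorem apply_eq_smul_of_commutator_eq_smul {h P : Module.End R M} {s c : R} {x : M}
    (hP : h * P - P * h = s • P) (hx : h x = c • x) : h (P x) = (c + s) • P x := by
  have := LinearMap.congr_fun hP x
  simp only [LinearMap.sub_apply, Module.End.mul_apply, LinearMap.smul_apply, hx,
    map_smul] at this
  rw [add_smul, ← this, add_sub_cancel]

variable {e f h : Module.End R M} {c : R} {x : M}

theorem e_apply_f_pow_succ_of_sl2 (hef : e * f - f * e = h) (hhf : h * f - f * h = (-2 : R) • f)
    (hx : h x = c • x) (n : ℕ) :
    e ((f ^ (n + 1)) x) = (f ^ (n + 1)) (e x) + ((n + 1) * (c - n)) • (f ^ n) x := by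
  have hefy (y : M) : e (f y) = f (e y) + h y :=
    eq_add_of_sub_eq' (LinearMap.congr_fun hef y)
  induction n generalizing c x with
  | zero => simpa [hx] using hefy x
  | succ n ih =>
    have hfx : h (f x) = (c + -2) • f x := apply_eq_smul_of_commutator_eq_smul hhf hx
    rw [pow_succ, Module.End.mul_apply, ih hfx, hefy, hx, map_add, map_smul,
      ← Module.End.mul_apply, ← pow_succ, ← Module.End.mul_apply (f ^ n), ← pow_succ]
    push_cast
    module

theorem e_apply_f_pow_of_sl2 (hef : e * f - f * e = h) (hhf : h * f - f * h = (-2 : R) • f)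
    (hx : h x = c • x) (n : ℕ) :
    e ((f ^ n) x) = (f ^ n) (e x) + (n * (c - n + 1)) • (f ^ (n - 1)) x := by
  cases n with
  | zero => simp
  | succ n =>
    rw [e_apply_f_pow_succ_of_sl2 hef hhf hx, Nat.add_sub_cancel]
    push_cast
    module

end Eigenvector

section Chevalley

variable {r : ℕ} {V : Type*} [AddCommGroup V] [Module ℂ V] {A : Fin r → Fin r → ℤ}
  {Ep Em H : Fin r → Module.End ℂ V} {i : Fin r}

theorem chainApp_eq_list_prod (J : List (Fin r)) (x : V) :
    chainApp Em J x = (J.map Em).prod x := by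
  induction J with
  | nil => rfl
  | cons j J ih => simp [chainApp, ← ih]

theorem chainApp_map_of_commute {e : Module.End ℂ V} {J : List (Fin r)}
    (hJ : ∀ j ∈ J, Commute e (Em j)) (x : V) :
    e (chainApp Em J x) = chainApp Em J (e x) := by
  rw [chainApp_eq_list_prod, chainApp_eq_list_prod]
  exact LinearMap.congr_fun (Commute.list_prod_right (J.map Em) e (by simpa using hJ)).eq x

theorem buildState_zero (J : Fin 1 → List (Fin r)) (Λ : V) (n : Fin 0 → ℕ) :
    buildState Em i 0 J Λ n = chainApp Em (J 0) Λ := rfl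

theorem buildState_succ {l : ℕ} (J : Fin (l + 2) → List (Fin r)) (Λ : V)
    (n : Fin (l + 1) → ℕ) :
    buildState Em i (l + 1) J Λ n =
      chainApp Em (J 0) ((Em i ^ n 0) (buildState Em i l (Fin.tail J) Λ (Fin.tail n))) := by
  simp [buildState, List.finRange_succ, List.foldr_map, Fin.tail, Fin.succ_castSucc,
    -Fin.castSucc_succ]

variable (A i) in
def stateWeight (μ : ℤ) {l : ℕ} (J : Fin (l + 1) → List (Fin r)) (n : Fin l → ℕ) : ℤ :=
  μ - ∑ m, ((J m).map fun j => A j i).sum - 2 * ∑ b, (n b : ℤ)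

-- `c_{k+1}` of the paper, blocks being indexed from `0` here: the weight of the state built
-- from the blocks after block `k`.
variable (A i) in
def tailWeight (μ : ℤ) {l : ℕ} (J : Fin (l + 1) → List (Fin r)) (n : Fin l → ℕ) (k : ℕ) : ℤ :=
  μ - (∑ m : Fin (l + 1), if k < (m : ℕ) then ((J m).map fun j => A j i).sum else 0)
    - 2 * (∑ b : Fin l, if k < (b : ℕ) then (n b : ℤ) else 0)

theorem stateWeight_succ (μ : ℤ) {l : ℕ} (J : Fin (l + 2) → List (Fin r))
    (n : Fin (l + 1) → ℕ) :
    stateWeight A i μ J n = stateWeight A i μ (Fin.tail J) (Fin.tail n)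
      - ((J 0).map fun j => A j i).sum - 2 * n 0 := by
  rw [stateWeight, stateWeight, Fin.sum_univ_succ (f := fun m => ((J m).map fun j => A j i).sum),
    Fin.sum_univ_succ (f := fun b => (n b : ℤ))]
  simp only [Fin.tail]
  ring

theorem tailWeight_zero (μ : ℤ) {l : ℕ} (J : Fin (l + 2) → List (Fin r)) (n : Fin (l + 1) → ℕ) :
    tailWeight A i μ J n 0 = stateWeight A i μ (Fin.tail J) (Fin.tail n) := by
  simp [tailWeight, stateWeight, Fin.sum_univ_succ, Fin.tail]

theorem tailWeight_succ (μ : ℤ) {l : ℕ} (J : Fin (l + 2) → List (Fin r)) (n : Fin (l + 1) → ℕ)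
    (k : ℕ) : tailWeight A i μ J n (k + 1) = tailWeight A i μ (Fin.tail J) (Fin.tail n) k := by
  simp [tailWeight, Fin.sum_univ_succ, Fin.tail]

theorem apply_chainApp_eq_smul (hHEm : ∀ j, H i * Em j - Em j * H i = (-(A j i) : ℂ) • Em j)
    {c : ℂ} {x : V} (hx : H i x = c • x) (J : List (Fin r)) :
    H i (chainApp Em J x) = (c - ((J.map fun j => A j i).sum : ℂ)) • chainApp Em J x := by
  rw [chainApp_eq_list_prod, apply_eq_smul_of_commutator_eq_smul
    (commutator_list_prod_eq_smul J fun j _ => hHEm j) hx]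
  push_cast [List.map_map, Function.comp_def]
  congr 1
  simpa [sub_eq_add_neg] using List.sum_map_mul_left J (fun j => (A j i : ℂ)) (-1)

theorem apply_pow_eq_smul (hHEm : ∀ j, H i * Em j - Em j * H i = (-(A j i) : ℂ) • Em j)
    (hA : A i i = 2) {c : ℂ} {x : V} (hx : H i x = c • x) (m : ℕ) :
    H i ((Em i ^ m) x) = (c - 2 * m) • (Em i ^ m) x := by
  rw [apply_eq_smul_of_commutator_eq_smul (commutator_pow_eq_smul (hHEm i) m) hx, hA]
  push_cast
  module

theorem apply_buildState_eq_smul (hHEm : ∀ j, H i * Em j - Em j * H i = (-(A j i) : ℂ) • Em j)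
    (hA : A i i = 2) {μ : ℤ} {Λ : V} (hΛ : H i Λ = (μ : ℂ) • Λ)
    {l : ℕ} (J : Fin (l + 1) → List (Fin r)) (n : Fin l → ℕ) :
    H i (buildState Em i l J Λ n) = (stateWeight A i μ J n : ℂ) • buildState Em i l J Λ n := by
  induction l with
  | zero =>
    rw [buildState_zero, apply_chainApp_eq_smul hHEm hΛ]
    simp [stateWeight]
  | succ l ih =>
    rw [buildState_succ, apply_chainApp_eq_smul hHEm
      (apply_pow_eq_smul hHEm hA (ih (Fin.tail J) (Fin.tail n)) _), stateWeight_succ]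
    push_cast
    module

theorem apply_buildState_eq_sum (hA : A i i = 2) (hef : Ep i * Em i - Em i * Ep i = H i)
    (hHEm : ∀ j, H i * Em j - Em j * H i = (-(A j i) : ℂ) • Em j)
    {μ : ℤ} {Λ : V} (hEpΛ : Ep i Λ = 0) (hHΛ : H i Λ = (μ : ℂ) • Λ) {l : ℕ}
    (J : Fin (l + 1) → List (Fin r)) (hJ : ∀ k, ∀ j ∈ J k, Commute (Ep i) (Em j))
    (n : Fin l → ℕ) :
    Ep i (buildState Em i l J Λ n) =
      ∑ k : Fin l, (((n k : ℤ) * (tailWeight A i μ J n k - ((n k : ℤ) - 1)) : ℤ) : ℂ) •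
        buildState Em i l J Λ (Function.update n k (n k - 1)) := by
  induction l with
  | zero =>
    rw [buildState_zero, chainApp_map_of_commute (hJ 0), hEpΛ, chainApp_eq_list_prod, map_zero]
    simp
  | succ l ih =>
    have hhf : H i * Em i - Em i * H i = (-2 : ℂ) • Em i := by simpa [hA] using hHEm i
    have hw := apply_buildState_eq_smul hHEm hA hHΛ (Fin.tail J) (Fin.tail n)
    rw [buildState_succ, chainApp_map_of_commute (hJ 0), e_apply_f_pow_of_sl2 hef hhf hw,
      ih (Fin.tail J) (fun k => hJ k.succ), Fin.sum_univ_succ, add_comm (G := V)]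
    simp only [chainApp_eq_list_prod, map_add, map_sum, map_smul]
    congr 1
    · rw [buildState_succ, Fin.tail_update_zero, Function.update_self, Fin.val_zero,
        tailWeight_zero, chainApp_eq_list_prod]
      push_cast
      module
    · refine Finset.sum_congr rfl fun k _ => ?_
      rw [buildState_succ, Fin.tail_update_succ, Function.update_of_ne (Fin.succ_ne_zero k).symm,
        Fin.val_succ, tailWeight_succ, chainApp_eq_list_prod]
      rfl

end Chevalley

theorem stmt6_general {r : ℕ} (A : Fin r → Fin r → ℤ) (hA : ∀ i, A i i = 2)
    {V : Type*} [NormedAddCommGroup V] [InnerProductSpace ℂ V]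
    (Ep Em H : Fin r → (V →ₗ[ℂ] V))
    (hEpEm : ∀ i j, Ep i ∘ₗ Em j - Em j ∘ₗ Ep i = if i = j then H i else 0)
    (hHEm : ∀ i j, H i ∘ₗ Em j - Em j ∘ₗ H i = (-(A j i) : ℂ) • Em j)
    (lam : Fin r → ℤ) (Λ : V)
    (hEpΛ : ∀ i, Ep i Λ = 0)
    (hHΛ : ∀ i, H i Λ = (lam i : ℂ) • Λ)
    (i : Fin r) (l : ℕ)
    (J : Fin (l + 1) → List (Fin r)) (hJ : ∀ k, ∀ j ∈ J k, j ≠ i)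
    (n : Fin l → ℕ) :
    Ep i (buildState Em i l J Λ n) =
      ∑ k : Fin l,
        (((n k : ℤ) *
            (lam i
              - (∑ m : Fin (l + 1),
                  if (k : ℕ) < (m : ℕ) then ((J m).map (fun j => A j i)).sum else 0)
              - 2 * (∑ b : Fin l, if (k : ℕ) < (b : ℕ) then (n b : ℤ) else 0)
              - ((n k : ℤ) - 1)) : ℤ) : ℂ) •
          buildState Em i l J Λ (Function.update n k (n k - 1)) := by
  have hcomm : ∀ k, ∀ j ∈ J k, Commute (Ep i) (Em j) := fun k j hj =>
    sub_eq_zero.mp ((hEpEm i j).trans (if_neg (hJ k j hj).symm))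
  exact apply_buildState_eq_sum (hA i) ((hEpEm i i).trans (if_pos rfl)) (hHEm i) (hEpΛ i)
    (hHΛ i) J hcomm n

theorem stmt6 {r : ℕ} (A : Fin r → Fin r → ℤ) (hA : ∀ i, A i i = 2)
    {V : Type*} [NormedAddCommGroup V] [InnerProductSpace ℂ V]
    (Ep Em H : Fin r → (V →ₗ[ℂ] V))
    (hEpEm : ∀ i j, Ep i ∘ₗ Em j - Em j ∘ₗ Ep i = if i = j then H i else 0)
    (hHEp : ∀ i j, H i ∘ₗ Ep j - Ep j ∘ₗ H i = (A j i : ℂ) • Ep j)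
    (hHEm : ∀ i j, H i ∘ₗ Em j - Em j ∘ₗ H i = (-(A j i) : ℂ) • Em j)
    (hHH : ∀ i j, H i ∘ₗ H j - H j ∘ₗ H i = 0)
    (hadj : ∀ i (x y : V), (inner ℂ (Ep i x) y : ℂ) = inner ℂ x (Em i y))
    (lam : Fin r → ℤ) (Λ : V)
    (hΛnorm : (inner ℂ Λ Λ : ℂ) = 1)
    (hEpΛ : ∀ i, Ep i Λ = 0)
    (hHΛ : ∀ i, H i Λ = (lam i : ℂ) • Λ)
    (i : Fin r) (l : ℕ) (hl : 1 ≤ l)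
    (J : Fin (l + 1) → List (Fin r)) (hJ : ∀ k, ∀ j ∈ J k, j ≠ i)
    (n : Fin l → ℕ) (hn : ∀ k, 1 ≤ n k) :
    Ep i (buildState Em i l J Λ n) =
      ∑ k : Fin l,
        (((n k : ℤ) *
            (lam i
              - (∑ m : Fin (l + 1),
                  if (k : ℕ) < (m : ℕ) then ((J m).map (fun j => A j i)).sum else 0)
              - 2 * (∑ b : Fin l, if (k : ℕ) < (b : ℕ) then (n b : ℤ) else 0)
              - ((n k : ℤ) - 1)) : ℤ) : ℂ) •
          buildState Em i l J Λ (Function.update n k (n k - 1)) :=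
  stmt6_general A hA Ep Em H hEpEm hHEm lam Λ hEpΛ hHΛ i l J hJ n
end

section
/- Theorem 3.5: For every index i ∈ Fin r and every list L over Fin r, the vector E⁺ i (v(L)) lies in the ℂ-linear span of the set of vectors v(L′), where L′ ranges over the lists obtained from L by deleting exactly one occurrence of the entry i. In particular, if i does not occur in L then E⁺ i (v(L)) = 0. -/
/-!
Each `v(L)` is an `H k`-eigenvector, because `[H k, E⁻ j]` is a multiple of `E⁻ j`. To compute
`E⁺ i (E⁻ j v(L))`, commute `E⁺ i` past `E⁻ j`: this gives `E⁻ j (E⁺ i v(L))`, handled by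
induction on `L`, plus the commutator `[E⁺ i, E⁻ j] v(L)`, which vanishes unless `j = i` and is
then `H i v(L)`, a multiple of `v(L)` — the vector obtained by deleting that leading `i`.
-/

namespace LoweringWord

variable {R M ι : Type*} [CommRing R] [AddCommGroup M] [Module R M]

/-- `lower Em v [i₁, …, iₙ] = Em i₁ (⋯ (Em iₙ v))`. -/
def lower (Em : ι → Module.End R M) (v : M) (L : List ι) : M :=
  L.foldr (fun j y => Em j y) v

variable (Em : ι → Module.End R M) (v : M)

@[simp]
theorem lower_nil : lower Em v [] = v := rfl

@[simp]
theorem lower_cons (j : ι) (L : List ι) : lower Em v (j :: L) = Em j (lower Em v L) := rfl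

theorem lower_mem_eigenspace {H : Module.End R M} {c : ι → R}
    (hcomm : ∀ j, H ∘ₗ Em j - Em j ∘ₗ H = c j • Em j) {μ : R} (hv : v ∈ H.eigenspace μ)
    (L : List ι) : lower Em v L ∈ H.eigenspace (μ + (L.map c).sum) := by
  rw [Module.End.mem_eigenspace_iff] at hv ⊢
  induction L with
  | nil => simpa using hv
  | cons j L ih =>
    have hswap : H (Em j (lower Em v L)) = Em j (H (lower Em v L)) + c j • Em j (lower Em v L) :=
      by simpa [sub_eq_iff_eq_add'] using LinearMap.congr_fun (hcomm j) (lower Em v L)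
    rw [lower_cons, hswap, ih, map_smul, List.map_cons, List.sum_cons]
    module

theorem apply_lower_mem_span_singleton {H : Module.End R M} {c : ι → R}
    (hcomm : ∀ j, H ∘ₗ Em j - Em j ∘ₗ H = c j • Em j) {μ : R} (hv : H v = μ • v) (L : List ι) :
    H (lower Em v L) ∈ R ∙ lower Em v L :=
  have hL := lower_mem_eigenspace Em v hcomm (Module.End.mem_eigenspace_iff.mpr hv) L
  Submodule.mem_span_singleton.mpr ⟨_, (Module.End.mem_eigenspace_iff.mp hL).symm⟩

def eraseOne (i : ι) (L : List ι) : Set M :=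
  {w | ∃ k : Fin L.length, L.get k = i ∧ w = lower Em v (L.eraseIdx k)}

theorem eraseOne_eq_empty {i : ι} {L : List ι} (hi : i ∉ L) : eraseOne Em v i L = ∅ :=
  Set.eq_empty_iff_forall_notMem.mpr fun _ ⟨k, hk, _⟩ => hi (hk ▸ L.get_mem k)

theorem image_eraseOne_subset (i j : ι) (L : List ι) :
    Em j '' eraseOne Em v i L ⊆ eraseOne Em v i (j :: L) := by
  rintro _ ⟨_, ⟨k, hk, rfl⟩, rfl⟩
  exact ⟨k.succ, by simpa using hk, by simp⟩

theorem mem_eraseOne_cons_self (i : ι) (L : List ι) : lower Em v L ∈ eraseOne Em v i (i :: L) :=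
  ⟨⟨0, by simp⟩, rfl, rfl⟩

theorem apply_lower_mem_span_eraseOne [DecidableEq ι] {X K : Module.End R M} {i : ι}
    (hcomm : ∀ j, X ∘ₗ Em j - Em j ∘ₗ X = if i = j then K else 0)
    (hK : ∀ L, K (lower Em v L) ∈ R ∙ lower Em v L) (hX : X v = 0) (L : List ι) :
    X (lower Em v L) ∈ Submodule.span R (eraseOne Em v i L) := by
  induction L with
  | nil => simp [hX]
  | cons j L ih =>
    have hswap : X (Em j (lower Em v L)) =
        Em j (X (lower Em v L)) + (if i = j then K else 0) (lower Em v L) := by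
      simpa [sub_eq_iff_eq_add'] using LinearMap.congr_fun (hcomm j) (lower Em v L)
    have hcommuted : Em j (X (lower Em v L)) ∈ Submodule.span R (eraseOne Em v i (j :: L)) := by
      refine Submodule.span_mono (image_eraseOne_subset Em v i j L) ?_
      rw [← Submodule.map_span]
      exact Submodule.mem_map_of_mem ih
    rw [lower_cons, hswap]
    refine add_mem hcommuted ?_
    split_ifs with hij
    · subst hij
      exact Submodule.span_mono (Set.singleton_subset_iff.mpr (mem_eraseOne_cons_self Em v i L))
        (hK L)
    · exact zero_mem _

end LoweringWord

theorem stmt7_general {r : ℕ} (A : Fin r → Fin r → ℤ)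
    {V : Type*} [NormedAddCommGroup V] [InnerProductSpace ℂ V]
    (Ep Em H : Fin r → (V →ₗ[ℂ] V))
    (hEpEm : ∀ i j, Ep i ∘ₗ Em j - Em j ∘ₗ Ep i = if i = j then H i else 0)
    (hHEm : ∀ i j, H i ∘ₗ Em j - Em j ∘ₗ H i = (-(A j i) : ℂ) • Em j)
    (lam : Fin r → ℤ) (Λ : V)
    (hEpΛ : ∀ i, Ep i Λ = 0)
    (hHΛ : ∀ i, H i Λ = (lam i : ℂ) • Λ)
    (i : Fin r) (L : List (Fin r)) :
    Ep i (L.foldr (fun j y => Em j y) Λ) ∈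
      Submodule.span ℂ
        {w : V | ∃ k : Fin L.length, L.get k = i ∧
            w = (L.eraseIdx (k : ℕ)).foldr (fun j y => Em j y) Λ} ∧
    (i ∉ L → Ep i (L.foldr (fun j y => Em j y) Λ) = 0) := by
  have hspan : Ep i (LoweringWord.lower Em Λ L) ∈
      Submodule.span ℂ (LoweringWord.eraseOne Em Λ i L) :=
    LoweringWord.apply_lower_mem_span_eraseOne Em Λ (hEpEm i)
      (LoweringWord.apply_lower_mem_span_singleton Em Λ (hHEm i) (hHΛ i)) (hEpΛ i) L
  refine ⟨hspan, fun hi => ?_⟩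
  rwa [LoweringWord.eraseOne_eq_empty Em Λ hi, Submodule.span_empty, Submodule.mem_bot] at hspan

theorem stmt7 {r : ℕ} (A : Fin r → Fin r → ℤ) (hA : ∀ i, A i i = 2)
    {V : Type*} [NormedAddCommGroup V] [InnerProductSpace ℂ V]
    (Ep Em H : Fin r → (V →ₗ[ℂ] V))
    (hEpEm : ∀ i j, Ep i ∘ₗ Em j - Em j ∘ₗ Ep i = if i = j then H i else 0)
    (hHEp : ∀ i j, H i ∘ₗ Ep j - Ep j ∘ₗ H i = (A j i : ℂ) • Ep j)
    (hHEm : ∀ i j, H i ∘ₗ Em j - Em j ∘ₗ H i = (-(A j i) : ℂ) • Em j)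
    (hHH : ∀ i j, H i ∘ₗ H j - H j ∘ₗ H i = 0)
    (hadj : ∀ i (x y : V), (inner ℂ (Ep i x) y : ℂ) = inner ℂ x (Em i y))
    (lam : Fin r → ℤ) (Λ : V)
    (hΛnorm : (inner ℂ Λ Λ : ℂ) = 1)
    (hEpΛ : ∀ i, Ep i Λ = 0)
    (hHΛ : ∀ i, H i Λ = (lam i : ℂ) • Λ)
    (i : Fin r) (L : List (Fin r)) :
    Ep i (L.foldr (fun j y => Em j y) Λ) ∈
      Submodule.span ℂ
        {w : V | ∃ k : Fin L.length, L.get k = i ∧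
            w = (L.eraseIdx (k : ℕ)).foldr (fun j y => Em j y) Λ} ∧
    (i ∉ L → Ep i (L.foldr (fun j y => Em j y) Λ) = 0) :=
  stmt7_general A Ep Em H hEpEm hHEm lam Λ hEpΛ hHΛ i L
end

section
/- Theorem 3.6 (path dependence of the inner product, with the G₂ values): In the G₂ specialization, let a := v([0, 1, 0, 0, 1]) (i.e. E⁻₁E⁻₂E⁻₁E⁻₁E⁻₂Λ) and b := v([1, 0, 0, 0, 1]) (i.e. E⁻₂E⁻₁E⁻₁E⁻₁E⁻₂Λ), two states of level 5 defined by different paths reaching the same weight (the two lists have the same multiset of entries). Then ⟪a, a⟫ = 24, ⟪a, b⟫ = 36 and ⟪b, b⟫ = 72; in particular ⟪a, a⟫ ≠ ⟪b, b⟫, so the inner product of states depends on the paths defining the states. -/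
/-!
Commuting `E⁺ i` through a path state `E⁻ i₁ ⋯ E⁻ iₙ Λ` kills it at `Λ` and, at each position
`k` with `iₖ = i`, leaves the path with `iₖ` deleted times the `i`-th weight of the state
`E⁻ iₖ₊₁ ⋯ E⁻ iₙ Λ`. Together with the adjointness `⟪E⁻ j x, y⟫ = ⟪x, E⁺ j y⟫` this turns the
Gram matrix of path states into an integer recursion on paths (the Shapovalov form), which for
the G₂ data evaluates to the three numbers 24, 36, 72.
-/

open scoped InnerProductSpace

section

variable {ι : Type*} {V : Type*} [NormedAddCommGroup V] [InnerProductSpace ℂ V]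

def weight (A : ι → ι → ℤ) (lam : ι → ℤ) (L : List ι) (i : ι) : ℤ :=
  lam i - (L.map (A · i)).sum

def pathState (Em : ι → V →ₗ[ℂ] V) (Λ : V) (L : List ι) : V :=
  L.foldr (fun j y => Em j y) Λ

@[simp]
theorem pathState_nil (Em : ι → V →ₗ[ℂ] V) (Λ : V) : pathState Em Λ [] = Λ := rfl

@[simp]
theorem pathState_cons (Em : ι → V →ₗ[ℂ] V) (Λ : V) (j : ι) (L : List ι) :
    pathState Em Λ (j :: L) = Em j (pathState Em Λ L) := rfl

variable {A : ι → ι → ℤ} {lam : ι → ℤ} {Ep Em H : ι → V →ₗ[ℂ] V} {Λ : V}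

theorem cartan_apply_pathState
    (hHEm : ∀ i j, H i ∘ₗ Em j - Em j ∘ₗ H i = (-(A j i) : ℂ) • Em j)
    (hHΛ : ∀ i, H i Λ = (lam i : ℂ) • Λ) (L : List ι) (i : ι) :
    H i (pathState Em Λ L) = (weight A lam L i : ℂ) • pathState Em Λ L := by
  induction L with
  | nil => simp [weight, hHΛ]
  | cons j L ih =>
    have h := LinearMap.congr_fun (hHEm i j) (pathState Em Λ L)
    rw [LinearMap.sub_apply, sub_eq_iff_eq_add, LinearMap.comp_apply, LinearMap.comp_apply,
      ih, map_smul, LinearMap.smul_apply] at h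
    rw [pathState_cons, h, weight, weight, List.map_cons, List.sum_cons]
    push_cast
    module

variable [DecidableEq ι]

/-- `E⁺ i` applied to the path state of `L`, as a formal `ℤ`-combination of paths. -/
def raise (A : ι → ι → ℤ) (lam : ι → ℤ) (i : ι) : List ι → List (ℤ × List ι)
  | [] => []
  | j :: L => (raise A lam i L).map (fun p => (p.1, j :: p.2)) ++
      if i = j then [(weight A lam L i, L)] else []

def shapovalov (A : ι → ι → ℤ) (lam : ι → ℤ) : List ι → List ι → ℤ
  | [], [] => 1
  | [], _ :: _ => 0
  | j :: L, M => ((raise A lam j M).map fun p => p.1 * shapovalov A lam L p.2).sum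

theorem raising_apply_pathState
    (hEpEm : ∀ i j, Ep i ∘ₗ Em j - Em j ∘ₗ Ep i = if i = j then H i else 0)
    (hHEm : ∀ i j, H i ∘ₗ Em j - Em j ∘ₗ H i = (-(A j i) : ℂ) • Em j)
    (hEpΛ : ∀ i, Ep i Λ = 0) (hHΛ : ∀ i, H i Λ = (lam i : ℂ) • Λ) (i : ι) (L : List ι) :
    Ep i (pathState Em Λ L) =
      ((raise A lam i L).map fun p => (p.1 : ℂ) • pathState Em Λ p.2).sum := by
  induction L with
  | nil => simp [raise, hEpΛ]
  | cons j L ih =>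
    have h := LinearMap.congr_fun (hEpEm i j) (pathState Em Λ L)
    rw [LinearMap.sub_apply, sub_eq_iff_eq_add, LinearMap.comp_apply, LinearMap.comp_apply] at h
    rw [pathState_cons, h, ih, raise, List.map_append, List.sum_append, map_list_sum,
      List.map_map, List.map_map, add_comm]
    split_ifs with hij
    · subst hij
      simp [cartan_apply_pathState hHEm hHΛ, Function.comp_def]
    · simp [Function.comp_def]

theorem inner_pathState_eq_shapovalov
    (hEpEm : ∀ i j, Ep i ∘ₗ Em j - Em j ∘ₗ Ep i = if i = j then H i else 0)
    (hHEm : ∀ i j, H i ∘ₗ Em j - Em j ∘ₗ H i = (-(A j i) : ℂ) • Em j)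
    (hadj : ∀ i (x y : V), (inner ℂ (Ep i x) y : ℂ) = inner ℂ x (Em i y))
    (hΛnorm : (inner ℂ Λ Λ : ℂ) = 1)
    (hEpΛ : ∀ i, Ep i Λ = 0) (hHΛ : ∀ i, H i Λ = (lam i : ℂ) • Λ) (L M : List ι) :
    ⟪pathState Em Λ L, pathState Em Λ M⟫_ℂ = shapovalov A lam L M := by
  induction L generalizing M with
  | nil =>
    cases M with
    | nil => simpa [shapovalov] using hΛnorm
    | cons j M => simp [shapovalov, ← hadj, hEpΛ]
  | cons j L ih =>
    have hadj' : ⟪Em j (pathState Em Λ L), pathState Em Λ M⟫_ℂ =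
        ⟪pathState Em Λ L, Ep j (pathState Em Λ M)⟫_ℂ := by
      rw [← inner_conj_symm, ← hadj, inner_conj_symm]
    rw [pathState_cons, hadj', raising_apply_pathState hEpEm hHEm hEpΛ hHΛ,
      ← innerₛₗ_apply_apply, map_list_sum]
    simp [shapovalov, inner_smul_right, ih, Function.comp_def]

end

theorem stmt8_general {V : Type*} [NormedAddCommGroup V] [InnerProductSpace ℂ V]
    (A : Fin 2 → Fin 2 → ℤ)
    (hA00 : A 0 0 = 2) (hA01 : A 0 1 = -1) (hA10 : A 1 0 = -3) (hA11 : A 1 1 = 2)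
    (Ep Em H : Fin 2 → (V →ₗ[ℂ] V))
    (hEpEm : ∀ i j, Ep i ∘ₗ Em j - Em j ∘ₗ Ep i = if i = j then H i else 0)
    (hHEm : ∀ i j, H i ∘ₗ Em j - Em j ∘ₗ H i = (-(A j i) : ℂ) • Em j)
    (hadj : ∀ i (x y : V), (inner ℂ (Ep i x) y : ℂ) = inner ℂ x (Em i y))
    (lam : Fin 2 → ℤ) (hlam0 : lam 0 = 0) (hlam1 : lam 1 = 1)
    (Λ : V)
    (hΛnorm : (inner ℂ Λ Λ : ℂ) = 1)
    (hEpΛ : ∀ i, Ep i Λ = 0)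
    (hHΛ : ∀ i, H i Λ = (lam i : ℂ) • Λ)
    (a b : V)
    (ha : a = ([0, 1, 0, 0, 1] : List (Fin 2)).foldr (fun j y => Em j y) Λ)
    (hb : b = ([1, 0, 0, 0, 1] : List (Fin 2)).foldr (fun j y => Em j y) Λ) :
    (inner ℂ a a : ℂ) = 24 ∧ (inner ℂ a b : ℂ) = 36 ∧ (inner ℂ b b : ℂ) = 72 ∧
      (inner ℂ a a : ℂ) ≠ (inner ℂ b b : ℂ) := by
  obtain rfl : A = ![![2, -1], ![-3, 2]] := by
    ext i j; fin_cases i <;> fin_cases j <;> simp [hA00, hA01, hA10, hA11]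
  obtain rfl : lam = ![0, 1] := by
    ext i; fin_cases i <;> simp [hlam0, hlam1]
  have gram : shapovalov ![![2, -1], ![-3, 2]] ![0, 1] [0, 1, 0, 0, 1] [0, 1, 0, 0, 1] = 24 ∧
      shapovalov ![![2, -1], ![-3, 2]] ![0, 1] [0, 1, 0, 0, 1] [1, 0, 0, 0, 1] = 36 ∧
      shapovalov ![![2, -1], ![-3, 2]] ![0, 1] [1, 0, 0, 0, 1] [1, 0, 0, 0, 1] = 72 := by
    decide
  have ha' : a = pathState Em Λ [0, 1, 0, 0, 1] := ha
  have hb' : b = pathState Em Λ [1, 0, 0, 0, 1] := hb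
  simp only [ha', hb', inner_pathState_eq_shapovalov hEpEm hHEm hadj hΛnorm hEpΛ hHΛ, gram]
  norm_num

theorem stmt8 {V : Type*} [NormedAddCommGroup V] [InnerProductSpace ℂ V]
    (A : Fin 2 → Fin 2 → ℤ)
    (hA00 : A 0 0 = 2) (hA01 : A 0 1 = -1) (hA10 : A 1 0 = -3) (hA11 : A 1 1 = 2)
    (Ep Em H : Fin 2 → (V →ₗ[ℂ] V))
    (hEpEm : ∀ i j, Ep i ∘ₗ Em j - Em j ∘ₗ Ep i = if i = j then H i else 0)
    (hHEp : ∀ i j, H i ∘ₗ Ep j - Ep j ∘ₗ H i = (A j i : ℂ) • Ep j)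
    (hHEm : ∀ i j, H i ∘ₗ Em j - Em j ∘ₗ H i = (-(A j i) : ℂ) • Em j)
    (hHH : ∀ i j, H i ∘ₗ H j - H j ∘ₗ H i = 0)
    (hadj : ∀ i (x y : V), (inner ℂ (Ep i x) y : ℂ) = inner ℂ x (Em i y))
    (lam : Fin 2 → ℤ) (hlam0 : lam 0 = 0) (hlam1 : lam 1 = 1)
    (Λ : V)
    (hΛnorm : (inner ℂ Λ Λ : ℂ) = 1)
    (hEpΛ : ∀ i, Ep i Λ = 0)
    (hHΛ : ∀ i, H i Λ = (lam i : ℂ) • Λ)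
    (a b : V)
    (ha : a = ([0, 1, 0, 0, 1] : List (Fin 2)).foldr (fun j y => Em j y) Λ)
    (hb : b = ([1, 0, 0, 0, 1] : List (Fin 2)).foldr (fun j y => Em j y) Λ) :
    (inner ℂ a a : ℂ) = 24 ∧ (inner ℂ a b : ℂ) = 36 ∧ (inner ℂ b b : ℂ) = 72 ∧
      (inner ℂ a a : ℂ) ≠ (inner ℂ b b : ℂ) :=
  stmt8_general A hA00 hA01 hA10 hA11 Ep Em H hEpEm hHEm hadj lam hlam0 hlam1 Λ hΛnorm hEpΛ hHΛ a b
    ha hb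
end

section
/- Proposition 4.1 (norm of a special state): Fix l ≥ 1, indices i₁, …, i_l ∈ Fin r, exponents n₁, …, n_l ≥ 1, and lists J₁, …, J_{l+1} over Fin r. Define states from the bottom up: start from Λ; having built a partial state ψ, each application of an operator E⁻ j with j an entry of some block J_k is assumed to satisfy E⁺ j ψ = 0 and H j ψ = ψ (H j–eigenvalue 1); and for each k = l, …, 1, letting Λᵏ denote the partial state right before the block (E⁻ (i_k))^{n_k} is applied, assume E⁺ (i_k) Λᵏ = 0 and H (i_k) Λᵏ = (n_k : ℂ) • Λᵏ (i.e. n_k equals the H (i_k)–eigenvalue Λᵏ_{i_k} of Λᵏ). Let x be the resulting state, built by applying, from the bottom, the chain for J_{l+1}, then (E⁻ (i_l))^{n_l}, then the chain for J_l, …, then (E⁻ (i₁))^{n₁}, then the chain for J₁. Then ⟪x, x⟫ = Π_{k=1}^{l} (n_k !)². -/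
/-- The state obtained by applying, from the bottom, the chain for `J (Fin.last l)` to `Λ`,
then `(Em (iIdx (l-1)))^(n (l-1))`, then the chain for `J (l-1)`, …; `buildFrom k` keeps only the
blocks of index `≥ k`, so `buildFrom 0` is the full state `x` and `buildFrom l` is the bottom
chain state. -/
noncomputable def buildFrom {r : ℕ} {V : Type*} [AddCommGroup V] [Module ℂ V]
    (Em : Fin r → (V →ₗ[ℂ] V)) (l : ℕ) (iIdx : Fin l → Fin r) (n : Fin l → ℕ)
    (J : Fin (l + 1) → List (Fin r)) (Λ : V) (k : ℕ) : V :=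
  ((List.finRange l).drop k).foldr
    (fun k x => chainApp Em (J k.castSucc) ((Em (iIdx k) ^ n k) x))
    (chainApp Em (J (Fin.last l)) Λ)

/-- The partial state to which the chain for the block `J k` is applied. -/
noncomputable def baseOf {r : ℕ} {V : Type*} [AddCommGroup V] [Module ℂ V]
    (Em : Fin r → (V →ₗ[ℂ] V)) (l : ℕ) (iIdx : Fin l → Fin r) (n : Fin l → ℕ)
    (J : Fin (l + 1) → List (Fin r)) (Λ : V) (k : Fin (l + 1)) : V :=
  if h : (k : ℕ) < l then
    (Em (iIdx ⟨k, h⟩) ^ n ⟨k, h⟩) (buildFrom Em l iIdx n J Λ ((k : ℕ) + 1))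
  else Λ

/-!
If `e ψ = 0` and `h ψ = μ • ψ` for operators with `[e, f] = h` and `[h, f] = -2 f`, then
`e (f^(k+1) ψ) = (k + 1) (μ - k) • f^k ψ`. When `e` is adjoint to `f` this gives
`⟪f^(k+1) ψ, f^(k+1) ψ⟫ = (k + 1) (μ - k) ⟪f^k ψ, f^k ψ⟫`, hence `⟪f^N ψ, f^N ψ⟫ = (N!)² ⟪ψ, ψ⟫`
for `μ = N`. A single lowering step of a chain is the case `N = 1` and preserves the norm, while a
block `(E⁻ i_k)^(n_k)` multiplies it by `(n_k!)²`; peeling off the blocks from the bottom yields the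
product.
-/

section Sl2

variable {R V : Type*} [CommRing R] [AddCommGroup V] [Module R V] {e f h : V →ₗ[R] V}
  {ψ : V} {μ : R}

theorem h_apply_pow_apply (hhf : h ∘ₗ f - f ∘ₗ h = -(2 : R) • f) (hψ : h ψ = μ • ψ) (k : ℕ) :
    h ((f ^ k) ψ) = (μ - 2 * k) • (f ^ k) ψ := by
  have hhf' (x : V) : h (f x) = f (h x) - (2 : R) • f x := by
    have := LinearMap.congr_fun hhf x
    simp only [LinearMap.sub_apply, LinearMap.comp_apply, LinearMap.smul_apply] at this
    linear_combination (norm := module) this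
  induction k with
  | zero => simpa using hψ
  | succ k ih =>
    rw [pow_succ', Module.End.mul_apply, hhf', ih, map_smul, ← sub_smul]
    congr 1
    push_cast
    ring

theorem e_apply_pow_succ_apply_of_primitive (hef : e ∘ₗ f - f ∘ₗ e = h)
    (hhf : h ∘ₗ f - f ∘ₗ h = -(2 : R) • f) (he : e ψ = 0) (hψ : h ψ = μ • ψ) (k : ℕ) :
    e ((f ^ (k + 1)) ψ) = ((k + 1) * (μ - k)) • (f ^ k) ψ := by
  have hef' (x : V) : e (f x) = f (e x) + h x := by
    rw [← hef]
    simp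
  induction k with
  | zero => simp [hef', he, hψ]
  | succ k ih =>
    rw [pow_succ', Module.End.mul_apply, hef', ih, map_smul, h_apply_pow_apply hhf hψ,
      ← Module.End.mul_apply, ← pow_succ', ← add_smul]
    congr 1
    push_cast
    ring

end Sl2

theorem Nat.cast_descFactorial_succ {S : Type*} [Ring S] (N k : ℕ) :
    (N.descFactorial (k + 1) : S) = ((N : S) - k) * N.descFactorial k := by
  rcases le_or_gt k N with hk | hk
  · rw [Nat.descFactorial_succ, Nat.cast_mul, Nat.cast_sub hk]
  · simp [Nat.descFactorial_eq_zero_iff_lt.mpr hk]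

section Norm

variable {V : Type*} [NormedAddCommGroup V] [InnerProductSpace ℂ V] {e f h : V →ₗ[ℂ] V}
  {ψ : V} {N : ℕ}

theorem inner_pow_apply_self_of_primitive (hadj : ∀ x y : V, inner ℂ (e x) y = inner ℂ x (f y))
    (hef : e ∘ₗ f - f ∘ₗ e = h) (hhf : h ∘ₗ f - f ∘ₗ h = -(2 : ℂ) • f) (he : e ψ = 0)
    (hψ : h ψ = (N : ℂ) • ψ) (k : ℕ) :
    inner ℂ ((f ^ k) ψ) ((f ^ k) ψ) = (k.factorial * N.descFactorial k : ℂ) * inner ℂ ψ ψ := by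
  induction k with
  | zero => simp
  | succ k ih =>
    have hpow : (f ^ (k + 1)) ψ = f ((f ^ k) ψ) := by rw [pow_succ', Module.End.mul_apply]
    have hstep : inner ℂ ((f ^ (k + 1)) ψ) ((f ^ (k + 1)) ψ)
        = ((k + 1) * ((N : ℂ) - k)) * inner ℂ ((f ^ k) ψ) ((f ^ k) ψ) := calc
      _ = inner ℂ (e ((f ^ (k + 1)) ψ)) ((f ^ k) ψ) := by rw [hadj, ← hpow]
      _ = _ := by
        rw [e_apply_pow_succ_apply_of_primitive hef hhf he hψ, inner_smul_left]
        simp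
    rw [hstep, ih, Nat.factorial_succ, Nat.cast_descFactorial_succ]
    push_cast
    ring

theorem inner_pow_self_apply_self_of_primitive
    (hadj : ∀ x y : V, inner ℂ (e x) y = inner ℂ x (f y))
    (hef : e ∘ₗ f - f ∘ₗ e = h) (hhf : h ∘ₗ f - f ∘ₗ h = -(2 : ℂ) • f) (he : e ψ = 0)
    (hψ : h ψ = (N : ℂ) • ψ) :
    inner ℂ ((f ^ N) ψ) ((f ^ N) ψ) = (N.factorial : ℂ) ^ 2 * inner ℂ ψ ψ := by
  rw [inner_pow_apply_self_of_primitive hadj hef hhf he hψ, Nat.descFactorial_self, sq]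

theorem inner_apply_self_of_primitive_of_eq_self
    (hadj : ∀ x y : V, inner ℂ (e x) y = inner ℂ x (f y))
    (hef : e ∘ₗ f - f ∘ₗ e = h) (hhf : h ∘ₗ f - f ∘ₗ h = -(2 : ℂ) • f) (he : e ψ = 0)
    (hψ : h ψ = ψ) :
    inner ℂ (f ψ) (f ψ) = inner ℂ ψ ψ := by
  simpa using inner_pow_self_apply_self_of_primitive (N := 1) hadj hef hhf he (by simpa using hψ)

end Norm

theorem List.drop_finRange_eq_cons {l : ℕ} (k : Fin l) :
    (List.finRange l).drop k = k :: (List.finRange l).drop (k + 1) := by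
  rw [List.drop_eq_getElem_cons (by simp)]
  simp

theorem List.drop_finRange_self (l : ℕ) : (List.finRange l).drop l = [] :=
  List.drop_eq_nil_of_le (by simp)

section Chevalley

variable {r : ℕ} {V : Type*} [NormedAddCommGroup V] [InnerProductSpace ℂ V]
  {Ep Em H : Fin r → (V →ₗ[ℂ] V)}

theorem chainApp_cons (j : Fin r) (J : List (Fin r)) (x : V) :
    chainApp Em (j :: J) x = Em j (chainApp Em J x) := rfl

theorem inner_chainApp_self (hadj : ∀ i (x y : V), inner ℂ (Ep i x) y = inner ℂ x (Em i y))
    (hef : ∀ i, Ep i ∘ₗ Em i - Em i ∘ₗ Ep i = H i)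
    (hhf : ∀ i, H i ∘ₗ Em i - Em i ∘ₗ H i = -(2 : ℂ) • Em i) (J : List (Fin r)) (b : V)
    (hJ : ∀ t : Fin J.length,
      Ep (J.get t) (chainApp Em (J.drop (t + 1)) b) = 0 ∧
        H (J.get t) (chainApp Em (J.drop (t + 1)) b) = chainApp Em (J.drop (t + 1)) b) :
    inner ℂ (chainApp Em J b) (chainApp Em J b) = inner ℂ b b := by
  induction J with
  | nil => rfl
  | cons j J ih =>
    obtain ⟨he, hψ⟩ : Ep j (chainApp Em J b) = 0 ∧ H j (chainApp Em J b) = chainApp Em J b :=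
      hJ ⟨0, J.length.zero_lt_succ⟩
    rw [chainApp_cons, inner_apply_self_of_primitive_of_eq_self (hadj j) (hef j) (hhf j) he hψ]
    exact ih fun t ↦ by simpa using hJ t.succ

variable {l : ℕ} {iIdx : Fin l → Fin r} {n : Fin l → ℕ} {J : Fin (l + 1) → List (Fin r)} {Λ : V}

theorem baseOf_last : baseOf Em l iIdx n J Λ (Fin.last l) = Λ := by
  simp [baseOf]

theorem baseOf_castSucc (k : Fin l) :
    baseOf Em l iIdx n J Λ k.castSucc =
      (Em (iIdx k) ^ n k) (buildFrom Em l iIdx n J Λ (k + 1)) := by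
  simp [baseOf]

theorem buildFrom_eq_chainApp_baseOf (k : Fin (l + 1)) :
    buildFrom Em l iIdx n J Λ k = chainApp Em (J k) (baseOf Em l iIdx n J Λ k) := by
  induction k using Fin.lastCases with
  | last => rw [baseOf_last, buildFrom, Fin.val_last, List.drop_finRange_self, List.foldr_nil]
  | cast k => rw [baseOf_castSucc, buildFrom, Fin.val_castSucc, List.drop_finRange_eq_cons,
      List.foldr_cons, buildFrom]

theorem inner_buildFrom_self (hadj : ∀ i (x y : V), inner ℂ (Ep i x) y = inner ℂ x (Em i y))
    (hef : ∀ i, Ep i ∘ₗ Em i - Em i ∘ₗ Ep i = H i)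
    (hhf : ∀ i, H i ∘ₗ Em i - Em i ∘ₗ H i = -(2 : ℂ) • Em i)
    (hblock : ∀ k : Fin l,
        Ep (iIdx k) (buildFrom Em l iIdx n J Λ ((k : ℕ) + 1)) = 0 ∧
        H (iIdx k) (buildFrom Em l iIdx n J Λ ((k : ℕ) + 1)) =
          (n k : ℂ) • buildFrom Em l iIdx n J Λ ((k : ℕ) + 1))
    (hchain : ∀ k : Fin (l + 1), ∀ t : Fin (J k).length,
        Ep ((J k).get t)
            (chainApp Em ((J k).drop ((t : ℕ) + 1)) (baseOf Em l iIdx n J Λ k)) = 0 ∧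
        H ((J k).get t)
            (chainApp Em ((J k).drop ((t : ℕ) + 1)) (baseOf Em l iIdx n J Λ k)) =
          chainApp Em ((J k).drop ((t : ℕ) + 1)) (baseOf Em l iIdx n J Λ k))
    (k : Fin (l + 1)) :
    inner ℂ (buildFrom Em l iIdx n J Λ k) (buildFrom Em l iIdx n J Λ k) =
      (((List.finRange l).drop k).map fun j ↦ ((n j).factorial : ℂ) ^ 2).prod * inner ℂ Λ Λ := by
  induction k using Fin.reverseInduction with
  | last =>
    rw [buildFrom_eq_chainApp_baseOf, inner_chainApp_self hadj hef hhf _ _ (hchain _), baseOf_last,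
      Fin.val_last, List.drop_finRange_self, List.map_nil, List.prod_nil, one_mul]
  | cast k ih =>
    rw [buildFrom_eq_chainApp_baseOf, inner_chainApp_self hadj hef hhf _ _ (hchain _),
      baseOf_castSucc, inner_pow_self_apply_self_of_primitive (hadj _) (hef _) (hhf _)
        (hblock k).1 (hblock k).2, ← Fin.val_succ, ih, Fin.val_castSucc,
      List.drop_finRange_eq_cons, List.map_cons, List.prod_cons, Fin.val_succ, mul_assoc]

end Chevalley

theorem stmt9_general {r : ℕ} (A : Fin r → Fin r → ℤ) (hA : ∀ i, A i i = 2)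
    {V : Type*} [NormedAddCommGroup V] [InnerProductSpace ℂ V]
    (Ep Em H : Fin r → (V →ₗ[ℂ] V))
    (hEpEm : ∀ i j, Ep i ∘ₗ Em j - Em j ∘ₗ Ep i = if i = j then H i else 0)
    (hHEm : ∀ i j, H i ∘ₗ Em j - Em j ∘ₗ H i = (-(A j i) : ℂ) • Em j)
    (hadj : ∀ i (x y : V), (inner ℂ (Ep i x) y : ℂ) = inner ℂ x (Em i y))
    (Λ : V)
    (hΛnorm : (inner ℂ Λ Λ : ℂ) = 1)
    (l : ℕ)
    (iIdx : Fin l → Fin r) (n : Fin l → ℕ)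
    (J : Fin (l + 1) → List (Fin r))
    (hblock : ∀ k : Fin l,
        Ep (iIdx k) (buildFrom Em l iIdx n J Λ ((k : ℕ) + 1)) = 0 ∧
        H (iIdx k) (buildFrom Em l iIdx n J Λ ((k : ℕ) + 1)) =
          (n k : ℂ) • buildFrom Em l iIdx n J Λ ((k : ℕ) + 1))
    (hchain : ∀ k : Fin (l + 1), ∀ t : Fin (J k).length,
        Ep ((J k).get t)
            (chainApp Em ((J k).drop ((t : ℕ) + 1)) (baseOf Em l iIdx n J Λ k)) = 0 ∧
        H ((J k).get t)
            (chainApp Em ((J k).drop ((t : ℕ) + 1)) (baseOf Em l iIdx n J Λ k)) =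
          chainApp Em ((J k).drop ((t : ℕ) + 1)) (baseOf Em l iIdx n J Λ k)) :
    (inner ℂ (buildFrom Em l iIdx n J Λ 0) (buildFrom Em l iIdx n J Λ 0) : ℂ) =
      ∏ k : Fin l, ((Nat.factorial (n k) : ℂ)) ^ 2 := by
  have hef (i : Fin r) : Ep i ∘ₗ Em i - Em i ∘ₗ Ep i = H i := by simpa using hEpEm i i
  have hhf (i : Fin r) : H i ∘ₗ Em i - Em i ∘ₗ H i = -(2 : ℂ) • Em i := by
    simpa [hA] using hHEm i i
  have := inner_buildFrom_self hadj hef hhf hblock hchain 0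
  rw [Fin.val_zero, List.drop_zero, hΛnorm, mul_one] at this
  rw [this, Fin.prod_univ_def]

theorem stmt9 {r : ℕ} (A : Fin r → Fin r → ℤ) (hA : ∀ i, A i i = 2)
    {V : Type*} [NormedAddCommGroup V] [InnerProductSpace ℂ V]
    (Ep Em H : Fin r → (V →ₗ[ℂ] V))
    (hEpEm : ∀ i j, Ep i ∘ₗ Em j - Em j ∘ₗ Ep i = if i = j then H i else 0)
    (hHEp : ∀ i j, H i ∘ₗ Ep j - Ep j ∘ₗ H i = (A j i : ℂ) • Ep j)
    (hHEm : ∀ i j, H i ∘ₗ Em j - Em j ∘ₗ H i = (-(A j i) : ℂ) • Em j)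
    (hHH : ∀ i j, H i ∘ₗ H j - H j ∘ₗ H i = 0)
    (hadj : ∀ i (x y : V), (inner ℂ (Ep i x) y : ℂ) = inner ℂ x (Em i y))
    (lam : Fin r → ℤ) (Λ : V)
    (hΛnorm : (inner ℂ Λ Λ : ℂ) = 1)
    (hEpΛ : ∀ i, Ep i Λ = 0)
    (hHΛ : ∀ i, H i Λ = (lam i : ℂ) • Λ)
    (l : ℕ) (hl : 1 ≤ l)
    (iIdx : Fin l → Fin r) (n : Fin l → ℕ) (hn : ∀ k, 1 ≤ n k)
    (J : Fin (l + 1) → List (Fin r))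
    (hblock : ∀ k : Fin l,
        Ep (iIdx k) (buildFrom Em l iIdx n J Λ ((k : ℕ) + 1)) = 0 ∧
        H (iIdx k) (buildFrom Em l iIdx n J Λ ((k : ℕ) + 1)) =
          (n k : ℂ) • buildFrom Em l iIdx n J Λ ((k : ℕ) + 1))
    (hchain : ∀ k : Fin (l + 1), ∀ t : Fin (J k).length,
        Ep ((J k).get t)
            (chainApp Em ((J k).drop ((t : ℕ) + 1)) (baseOf Em l iIdx n J Λ k)) = 0 ∧
        H ((J k).get t)
            (chainApp Em ((J k).drop ((t : ℕ) + 1)) (baseOf Em l iIdx n J Λ k)) =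
          chainApp Em ((J k).drop ((t : ℕ) + 1)) (baseOf Em l iIdx n J Λ k)) :
    (inner ℂ (buildFrom Em l iIdx n J Λ 0) (buildFrom Em l iIdx n J Λ 0) : ℂ) =
      ∏ k : Fin l, ((Nat.factorial (n k) : ℂ)) ^ 2 :=
  stmt9_general A hA Ep Em H hEpEm hHEm hadj Λ hΛnorm l iIdx n J hblock hchain
end

section
/- Theorem 4.2: Assume the minuscule hypothesis. If L₁ and L₂ are lists over Fin r with the same multiset of entries (two paths reaching the same weight) such that v(L₁) ≠ 0 and v(L₂) ≠ 0, then ⟪v(L₁), v(L₂)⟫ = 1. -/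
/-!
If `v(i :: M) ≠ 0` then `v(M)` has `H i`-weight `1`: the weights of `v(M)` and `v(i :: M)` lie in
`{-1, 0, 1}` and differ by `A i i = 2`. Hence `E⁺ i v(L)` is a sum, with all coefficients `1`, of
the `v(N)` with `i :: N ~ L`; in particular `E⁺ i v(i :: M) = v(M)`, so by adjointness every
nonzero `v(L)` is a unit vector. One then shows `v(L₁) = v(L₂)` by induction on `L₁ = i :: M₁`:
by the induction hypothesis `E⁺ i v(L₂) = k • v(M₁)` for some `k : ℕ`; as `v(L₂)` has
`H i`-weight `-1`, `E⁻ i v(L₂) = 0`, so `E⁻ i E⁺ i v(L₂) = v(L₂)` and `v(L₂) = k • v(L₁)`;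
comparing norms, `k = 1`.
-/

lemma List.exists_sum_eq_nsmul_of_forall_eq_zero_or_eq {M : Type*} [AddMonoid M] {u : M}
    {l : List M} (h : ∀ x ∈ l, x = 0 ∨ x = u) : ∃ k : ℕ, l.sum = k • u := by
  induction l with
  | nil => exact ⟨0, by simp⟩
  | cons a l ih =>
    obtain ⟨k, hk⟩ := ih fun x hx => h x (mem_cons_of_mem a hx)
    rcases h a mem_cons_self with rfl | rfl
    · exact ⟨k, by rw [sum_cons, hk, zero_add]⟩
    · exact ⟨k + 1, by rw [sum_cons, hk, succ_nsmul']⟩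

lemma LinearMap.apply_apply_eq_of_comp_sub_comp {R M : Type*} [Semiring R] [AddCommGroup M]
    [Module R M] {f g c : M →ₗ[R] M} (h : f ∘ₗ g - g ∘ₗ f = c) (x : M) :
    f (g x) = g (f x) + c x := by
  rw [← h, sub_apply, comp_apply, comp_apply, add_sub_cancel]

lemma inner_apply_left_of_adjoint {𝕜 E : Type*} [RCLike 𝕜] [NormedAddCommGroup E]
    [InnerProductSpace 𝕜 E] {f g : E → E}
    (hadj : ∀ x y, (inner 𝕜 (f x) y : 𝕜) = inner 𝕜 x (g y)) (x y : E) :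
    (inner 𝕜 (g x) y : 𝕜) = inner 𝕜 x (f y) := by
  rw [← inner_conj_symm, ← hadj, inner_conj_symm]

namespace Minuscule

open LinearMap

variable {r : ℕ} {V : Type*} [NormedAddCommGroup V] [InnerProductSpace ℂ V]

def pathVec (Em : Fin r → V →ₗ[ℂ] V) (Λ : V) (L : List (Fin r)) : V :=
  L.foldr (fun j y => Em j y) Λ

def pathWeight (A : Fin r → Fin r → ℤ) (lam : Fin r → ℤ) (L : List (Fin r)) (i : Fin r) : ℤ :=
  lam i - (L.map fun j => A j i).sum

section Weights

variable (A : Fin r → Fin r → ℤ) (lam : Fin r → ℤ)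

lemma pathWeight_cons (j : Fin r) (M : List (Fin r)) (i : Fin r) :
    pathWeight A lam (j :: M) i = pathWeight A lam M i - A j i := by
  simp only [pathWeight, List.map_cons, List.sum_cons]
  ring

lemma pathWeight_perm {L₁ L₂ : List (Fin r)} (h : L₁.Perm L₂) :
    pathWeight A lam L₁ = pathWeight A lam L₂ := by
  ext i
  simp only [pathWeight, (h.map _).sum_eq]

end Weights

def IsMinuscule (A : Fin r → Fin r → ℤ) (Em : Fin r → V →ₗ[ℂ] V) (lam : Fin r → ℤ) (Λ : V) :
    Prop :=
  ∀ L, pathVec Em Λ L ≠ 0 → ∀ i, pathWeight A lam L i ∈ ({-1, 0, 1} : Set ℤ)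

variable {A : Fin r → Fin r → ℤ} {Ep Em H : Fin r → V →ₗ[ℂ] V} {lam : Fin r → ℤ} {Λ : V}

lemma pathVec_cons (j : Fin r) (M : List (Fin r)) :
    pathVec Em Λ (j :: M) = Em j (pathVec Em Λ M) :=
  rfl

lemma pathVec_ne_zero_of_cons {j : Fin r} {M : List (Fin r)} (h : pathVec Em Λ (j :: M) ≠ 0) :
    pathVec Em Λ M ≠ 0 := by
  intro hM
  exact h (by rw [pathVec_cons, hM, map_zero])

lemma apply_pathVec_eq_pathWeight_smul
    (hHEm : ∀ i j, H i ∘ₗ Em j - Em j ∘ₗ H i = (-(A j i) : ℂ) • Em j)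
    (hHΛ : ∀ i, H i Λ = (lam i : ℂ) • Λ) (L : List (Fin r)) (i : Fin r) :
    H i (pathVec Em Λ L) = (pathWeight A lam L i : ℂ) • pathVec Em Λ L := by
  induction L with
  | nil => simpa [pathVec, pathWeight] using hHΛ i
  | cons j M ih =>
    rw [pathVec_cons, apply_apply_eq_of_comp_sub_comp (hHEm i j), ih, map_smul,
      LinearMap.smul_apply, ← add_smul, pathWeight_cons]
    push_cast
    ring_nf

lemma pathWeight_eq_one_of_cons (hA : ∀ i, A i i = 2)
    (hmin : IsMinuscule A Em lam Λ)
    {i : Fin r} {M : List (Fin r)} (h : pathVec Em Λ (i :: M) ≠ 0) :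
    pathWeight A lam M i = 1 := by
  have hM := hmin M (pathVec_ne_zero_of_cons h) i
  have hiM := hmin (i :: M) h i
  rw [pathWeight_cons, hA] at hiM
  simp only [Set.mem_insert_iff, Set.mem_singleton_iff] at hM hiM
  omega

lemma pathVec_cons_eq_zero_of_pathWeight_eq_neg_one (hA : ∀ i, A i i = 2)
    (hmin : IsMinuscule A Em lam Λ)
    {i : Fin r} {L : List (Fin r)} (hw : pathWeight A lam L i = -1) :
    pathVec Em Λ (i :: L) = 0 := by
  by_contra h
  have := hmin (i :: L) h i
  rw [pathWeight_cons, hA, hw] at this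
  norm_num at this

/-- The coefficients, a priori `H i`-weights of suffixes `v(M)` with `v(i :: M) ≠ 0`, are all `1`
by `pathWeight_eq_one_of_cons`. -/
lemma exists_apply_pathVec_eq_sum (hA : ∀ i, A i i = 2)
    (hEpEm : ∀ i j, Ep i ∘ₗ Em j - Em j ∘ₗ Ep i = if i = j then H i else 0)
    (hHEm : ∀ i j, H i ∘ₗ Em j - Em j ∘ₗ H i = (-(A j i) : ℂ) • Em j)
    (hEpΛ : ∀ i, Ep i Λ = 0) (hHΛ : ∀ i, H i Λ = (lam i : ℂ) • Λ)
    (hmin : IsMinuscule A Em lam Λ)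
    (i : Fin r) {L : List (Fin r)} (hL : pathVec Em Λ L ≠ 0) :
    ∃ T : List (List (Fin r)), (∀ N ∈ T, (i :: N).Perm L) ∧
      Ep i (pathVec Em Λ L) = (T.map (pathVec Em Λ)).sum := by
  induction L with
  | nil => exact ⟨[], by simp, by simpa [pathVec] using hEpΛ i⟩
  | cons j M ih =>
    obtain ⟨T, hT, hsum⟩ := ih (pathVec_ne_zero_of_cons hL)
    have hcons : ∀ N ∈ T.map (j :: ·), (i :: N).Perm (j :: M) := by
      simp only [List.mem_map]
      rintro _ ⟨N, hN, rfl⟩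
      exact (List.Perm.swap j i N).trans ((hT N hN).cons j)
    have hsum_cons :
        Em j (Ep i (pathVec Em Λ M)) = ((T.map (j :: ·)).map (pathVec Em Λ)).sum := by
      rw [hsum, map_list_sum, List.map_map, List.map_map]
      rfl
    rw [pathVec_cons, apply_apply_eq_of_comp_sub_comp (hEpEm i j), hsum_cons]
    split_ifs with hij
    · subst hij
      refine ⟨M :: T.map (i :: ·), ?_, ?_⟩
      · simpa using hcons
      · rw [apply_pathVec_eq_pathWeight_smul hHEm hHΛ, pathWeight_eq_one_of_cons hA hmin hL,
          List.map_cons, List.sum_cons, Int.cast_one, one_smul, add_comm]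
    · exact ⟨T.map (j :: ·), hcons, by rw [LinearMap.zero_apply, add_zero]⟩

lemma apply_pathVec_eq_zero_of_cons (hA : ∀ i, A i i = 2)
    (hEpEm : ∀ i j, Ep i ∘ₗ Em j - Em j ∘ₗ Ep i = if i = j then H i else 0)
    (hHEm : ∀ i j, H i ∘ₗ Em j - Em j ∘ₗ H i = (-(A j i) : ℂ) • Em j)
    (hEpΛ : ∀ i, Ep i Λ = 0) (hHΛ : ∀ i, H i Λ = (lam i : ℂ) • Λ)
    (hmin : IsMinuscule A Em lam Λ)
    {i : Fin r} {M : List (Fin r)} (h : pathVec Em Λ (i :: M) ≠ 0) :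
    Ep i (pathVec Em Λ M) = 0 := by
  obtain ⟨T, hT, hsum⟩ := exists_apply_pathVec_eq_sum hA hEpEm hHEm hEpΛ hHΛ hmin i
    (pathVec_ne_zero_of_cons h)
  rw [hsum]
  refine List.sum_eq_zero fun x hx => ?_
  obtain ⟨N, hN, rfl⟩ := List.mem_map.1 hx
  -- `v(N)` would have `H i`-weight `1 + 2 = 3`.
  by_contra hN0
  have hw := hmin N hN0 i
  have hperm := congrFun (pathWeight_perm A lam (hT N hN)) i
  rw [pathWeight_cons, pathWeight_eq_one_of_cons hA hmin h, hA] at hperm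
  rw [show pathWeight A lam N i = 3 by omega] at hw
  norm_num at hw

lemma apply_pathVec_cons_self (hA : ∀ i, A i i = 2)
    (hEpEm : ∀ i j, Ep i ∘ₗ Em j - Em j ∘ₗ Ep i = if i = j then H i else 0)
    (hHEm : ∀ i j, H i ∘ₗ Em j - Em j ∘ₗ H i = (-(A j i) : ℂ) • Em j)
    (hEpΛ : ∀ i, Ep i Λ = 0) (hHΛ : ∀ i, H i Λ = (lam i : ℂ) • Λ)
    (hmin : IsMinuscule A Em lam Λ)
    {i : Fin r} {M : List (Fin r)} (h : pathVec Em Λ (i :: M) ≠ 0) :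
    Ep i (pathVec Em Λ (i :: M)) = pathVec Em Λ M := by
  rw [pathVec_cons, apply_apply_eq_of_comp_sub_comp (hEpEm i i), if_pos rfl,
    apply_pathVec_eq_zero_of_cons hA hEpEm hHEm hEpΛ hHΛ hmin h, map_zero, zero_add,
    apply_pathVec_eq_pathWeight_smul hHEm hHΛ, pathWeight_eq_one_of_cons hA hmin h,
    Int.cast_one, one_smul]

lemma inner_self_pathVec (hA : ∀ i, A i i = 2)
    (hEpEm : ∀ i j, Ep i ∘ₗ Em j - Em j ∘ₗ Ep i = if i = j then H i else 0)
    (hHEm : ∀ i j, H i ∘ₗ Em j - Em j ∘ₗ H i = (-(A j i) : ℂ) • Em j)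
    (hadj : ∀ i (x y : V), (inner ℂ (Ep i x) y : ℂ) = inner ℂ x (Em i y))
    (hΛnorm : (inner ℂ Λ Λ : ℂ) = 1)
    (hEpΛ : ∀ i, Ep i Λ = 0) (hHΛ : ∀ i, H i Λ = (lam i : ℂ) • Λ)
    (hmin : IsMinuscule A Em lam Λ)
    {L : List (Fin r)} (hL : pathVec Em Λ L ≠ 0) :
    (inner ℂ (pathVec Em Λ L) (pathVec Em Λ L) : ℂ) = 1 := by
  induction L with
  | nil => exact hΛnorm
  | cons i M ih =>
    calc (inner ℂ (Em i (pathVec Em Λ M)) (pathVec Em Λ (i :: M)) : ℂ)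
        = inner ℂ (pathVec Em Λ M) (Ep i (pathVec Em Λ (i :: M))) :=
          inner_apply_left_of_adjoint (hadj i) _ _
      _ = inner ℂ (pathVec Em Λ M) (pathVec Em Λ M) := by
          rw [apply_pathVec_cons_self hA hEpEm hHEm hEpΛ hHΛ hmin hL]
      _ = 1 := ih (pathVec_ne_zero_of_cons hL)

lemma apply_apply_pathVec_of_pathWeight_eq_neg_one (hA : ∀ i, A i i = 2)
    (hEpEm : ∀ i j, Ep i ∘ₗ Em j - Em j ∘ₗ Ep i = if i = j then H i else 0)
    (hHEm : ∀ i j, H i ∘ₗ Em j - Em j ∘ₗ H i = (-(A j i) : ℂ) • Em j)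
    (hHΛ : ∀ i, H i Λ = (lam i : ℂ) • Λ)
    (hmin : IsMinuscule A Em lam Λ)
    {i : Fin r} {L : List (Fin r)} (hw : pathWeight A lam L i = -1) :
    Em i (Ep i (pathVec Em Λ L)) = pathVec Em Λ L := by
  have hc := apply_apply_eq_of_comp_sub_comp (hEpEm i i) (pathVec Em Λ L)
  rw [← pathVec_cons, pathVec_cons_eq_zero_of_pathWeight_eq_neg_one hA hmin hw, map_zero,
    if_pos rfl, apply_pathVec_eq_pathWeight_smul hHEm hHΛ, hw, Int.cast_neg, Int.cast_one,
    neg_one_smul, eq_comm, add_neg_eq_zero] at hc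
  exact hc

theorem pathVec_eq_of_perm (hA : ∀ i, A i i = 2)
    (hEpEm : ∀ i j, Ep i ∘ₗ Em j - Em j ∘ₗ Ep i = if i = j then H i else 0)
    (hHEm : ∀ i j, H i ∘ₗ Em j - Em j ∘ₗ H i = (-(A j i) : ℂ) • Em j)
    (hadj : ∀ i (x y : V), (inner ℂ (Ep i x) y : ℂ) = inner ℂ x (Em i y))
    (hΛnorm : (inner ℂ Λ Λ : ℂ) = 1)
    (hEpΛ : ∀ i, Ep i Λ = 0) (hHΛ : ∀ i, H i Λ = (lam i : ℂ) • Λ)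
    (hmin : IsMinuscule A Em lam Λ)
    {L₁ L₂ : List (Fin r)} (hp : L₁.Perm L₂) (h₁ : pathVec Em Λ L₁ ≠ 0)
    (h₂ : pathVec Em Λ L₂ ≠ 0) : pathVec Em Λ L₁ = pathVec Em Λ L₂ := by
  induction L₁ generalizing L₂ with
  | nil => rw [List.nil_perm.1 hp]
  | cons i M₁ ih =>
    have hM₁ := pathVec_ne_zero_of_cons h₁
    have hw : pathWeight A lam L₂ i = -1 := by
      rw [← pathWeight_perm A lam hp, pathWeight_cons, pathWeight_eq_one_of_cons hA hmin h₁, hA]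
      norm_num
    obtain ⟨T, hT, hsum⟩ := exists_apply_pathVec_eq_sum hA hEpEm hHEm hEpΛ hHΛ hmin i h₂
    have hterms : ∀ x ∈ T.map (pathVec Em Λ), x = 0 ∨ x = pathVec Em Λ M₁ := by
      simp only [List.mem_map]
      rintro _ ⟨N, hN, rfl⟩
      refine or_iff_not_imp_left.2 fun hN0 => (ih ?_ hM₁ hN0).symm
      exact (((hT N hN).trans hp.symm).cons_inv).symm
    obtain ⟨k, hk⟩ := List.exists_sum_eq_nsmul_of_forall_eq_zero_or_eq hterms
    have hL₂ : pathVec Em Λ L₂ = k • pathVec Em Λ (i :: M₁) := by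
      rw [← apply_apply_pathVec_of_pathWeight_eq_neg_one hA hEpEm hHEm hHΛ hmin hw, hsum, hk,
        map_nsmul]
      rfl
    have hk : k * k = 1 := by
      refine Nat.cast_injective (R := ℂ) ?_
      have := inner_self_pathVec hA hEpEm hHEm hadj hΛnorm hEpΛ hHΛ hmin h₂
      rwa [hL₂, ← Nat.cast_smul_eq_nsmul ℂ, inner_smul_left, inner_smul_right,
        inner_self_pathVec hA hEpEm hHEm hadj hΛnorm hEpΛ hHΛ hmin h₁, map_natCast, mul_one,
        ← Nat.cast_mul, ← Nat.cast_one] at this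
    rw [hL₂, Nat.eq_one_of_mul_eq_one_right hk, one_smul]

end Minuscule

open Minuscule in
theorem stmt11_general {r : ℕ} (A : Fin r → Fin r → ℤ) (hA : ∀ i, A i i = 2)
    {V : Type*} [NormedAddCommGroup V] [InnerProductSpace ℂ V]
    (Ep Em H : Fin r → (V →ₗ[ℂ] V))
    (hEpEm : ∀ i j, Ep i ∘ₗ Em j - Em j ∘ₗ Ep i = if i = j then H i else 0)
    (hHEm : ∀ i j, H i ∘ₗ Em j - Em j ∘ₗ H i = (-(A j i) : ℂ) • Em j)
    (hadj : ∀ i (x y : V), (inner ℂ (Ep i x) y : ℂ) = inner ℂ x (Em i y))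
    (lam : Fin r → ℤ) (Λ : V)
    (hΛnorm : (inner ℂ Λ Λ : ℂ) = 1)
    (hEpΛ : ∀ i, Ep i Λ = 0)
    (hHΛ : ∀ i, H i Λ = (lam i : ℂ) • Λ)
    (hmin : ∀ L : List (Fin r), L.foldr (fun j y => Em j y) Λ ≠ 0 →
        ∀ i, (lam i - (L.map (fun j => A j i)).sum) ∈ ({-1, 0, 1} : Set ℤ))
    (L₁ L₂ : List (Fin r)) (hmult : (L₁ : Multiset (Fin r)) = (L₂ : Multiset (Fin r)))
    (h1 : L₁.foldr (fun j y => Em j y) Λ ≠ 0)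
    (h2 : L₂.foldr (fun j y => Em j y) Λ ≠ 0) :
    (inner ℂ (L₁.foldr (fun j y => Em j y) Λ) (L₂.foldr (fun j y => Em j y) Λ) : ℂ) = 1 := by
  have heq : pathVec Em Λ L₁ = pathVec Em Λ L₂ := pathVec_eq_of_perm hA hEpEm hHEm hadj hΛnorm
    hEpΛ hHΛ hmin (Multiset.coe_eq_coe.1 hmult) h1 h2
  change (inner ℂ (pathVec Em Λ L₁) (pathVec Em Λ L₂) : ℂ) = 1
  rw [← heq]
  exact inner_self_pathVec hA hEpEm hHEm hadj hΛnorm hEpΛ hHΛ hmin h1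

theorem stmt11 {r : ℕ} (A : Fin r → Fin r → ℤ) (hA : ∀ i, A i i = 2)
    {V : Type*} [NormedAddCommGroup V] [InnerProductSpace ℂ V]
    (Ep Em H : Fin r → (V →ₗ[ℂ] V))
    (hEpEm : ∀ i j, Ep i ∘ₗ Em j - Em j ∘ₗ Ep i = if i = j then H i else 0)
    (hHEp : ∀ i j, H i ∘ₗ Ep j - Ep j ∘ₗ H i = (A j i : ℂ) • Ep j)
    (hHEm : ∀ i j, H i ∘ₗ Em j - Em j ∘ₗ H i = (-(A j i) : ℂ) • Em j)
    (hHH : ∀ i j, H i ∘ₗ H j - H j ∘ₗ H i = 0)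
    (hadj : ∀ i (x y : V), (inner ℂ (Ep i x) y : ℂ) = inner ℂ x (Em i y))
    (lam : Fin r → ℤ) (Λ : V)
    (hΛnorm : (inner ℂ Λ Λ : ℂ) = 1)
    (hEpΛ : ∀ i, Ep i Λ = 0)
    (hHΛ : ∀ i, H i Λ = (lam i : ℂ) • Λ)
    (hmin : ∀ L : List (Fin r), L.foldr (fun j y => Em j y) Λ ≠ 0 →
        ∀ i, (lam i - (L.map (fun j => A j i)).sum) ∈ ({-1, 0, 1} : Set ℤ))
    (L₁ L₂ : List (Fin r)) (hmult : (L₁ : Multiset (Fin r)) = (L₂ : Multiset (Fin r)))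
    (h1 : L₁.foldr (fun j y => Em j y) Λ ≠ 0)
    (h2 : L₂.foldr (fun j y => Em j y) Λ ≠ 0) :
    (inner ℂ (L₁.foldr (fun j y => Em j y) Λ) (L₂.foldr (fun j y => Em j y) Λ) : ℂ) = 1 :=
  stmt11_general A hA Ep Em H hEpEm hHEm hadj lam Λ hΛnorm hEpΛ hHΛ hmin L₁ L₂ hmult h1 h2
end

section
/- Norms in minuscule representations (the ⟨λ'''|λ'''⟩ = 1 claim): Assume the minuscule hypothesis. Then every nonzero chain state has norm one: for every list L over Fin r with v(L) ≠ 0, one has ⟪v(L), v(L)⟫ = 1. -/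
/-!
Induct on the list. Write `w = v(t)` and `v(i :: t) = f w` with `e, f, h = E⁺ i, E⁻ i, H i`.
Minuscularity forces the `h`-weight of `w` to be `1` (both it and that weight minus `2` lie in
`{-1, 0, 1}`) and `f (f w) = 0` (its weight would be `-3`). In the resulting unitary
`sl₂`-situation `e w = 0`, so `‖f w‖² = ‖e w‖² + ‖w‖² = ‖w‖²`.
-/

open scoped InnerProductSpace

section Weights

variable {ι V : Type*} [AddCommGroup V] [Module ℂ V]

theorem apply_foldr_eq_smul_of_commutator (T : V →ₗ[ℂ] V) (f : ι → V →ₗ[ℂ] V) (a : ι → ℂ)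
    (hT : ∀ j, T ∘ₗ f j - f j ∘ₗ T = -a j • f j) {v : V} {μ : ℂ} (hv : T v = μ • v)
    (L : List ι) :
    T (L.foldr (fun j y => f j y) v) =
      (μ - (L.map a).sum) • L.foldr (fun j y => f j y) v := by
  induction L with
  | nil => simpa using hv
  | cons j t ih =>
    have hcomm := LinearMap.congr_fun (hT j) (t.foldr (fun j y => f j y) v)
    simp only [LinearMap.sub_apply, LinearMap.comp_apply, LinearMap.smul_apply, ih,
      map_smul] at hcomm
    simp only [List.foldr_cons, List.map_cons, List.sum_cons]
    rw [sub_eq_iff_eq_add] at hcomm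
    rw [hcomm]
    module

end Weights

section UnitarySL2

variable {V : Type*} [NormedAddCommGroup V] [InnerProductSpace ℂ V] {e f h : V →ₗ[ℂ] V}

theorem inner_apply_left_of_adjoint_s12 (hadj : ∀ x y, ⟪e x, y⟫_ℂ = ⟪x, f y⟫_ℂ) (x y : V) :
    ⟪f x, y⟫_ℂ = ⟪x, e y⟫_ℂ := by
  rw [← inner_conj_symm, ← hadj, inner_conj_symm]

theorem inner_self_apply_eq_of_eigen (hef : e ∘ₗ f - f ∘ₗ e = h)
    (hadj : ∀ x y, ⟪e x, y⟫_ℂ = ⟪x, f y⟫_ℂ) {x : V} {c : ℂ} (hx : h x = c • x) :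
    ⟪f x, f x⟫_ℂ = ⟪e x, e x⟫_ℂ + c * ⟪x, x⟫_ℂ := by
  have hefx : e (f x) = f (e x) + c • x := by
    rw [← hx, ← hef]; simp
  rw [inner_apply_left_of_adjoint_s12 hadj, hefx, inner_add_right, ← hadj, inner_smul_right]

theorem apply_eq_zero_of_eigen_one (hef : e ∘ₗ f - f ∘ₗ e = h)
    (hhf : h ∘ₗ f - f ∘ₗ h = (-2 : ℂ) • f) (hadj : ∀ x y, ⟪e x, y⟫_ℂ = ⟪x, f y⟫_ℂ)
    {w : V} (hw : h w = w) (hffw : f (f w) = 0) : e w = 0 := by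
  set p := e w
  set m := f w
  have hm : h m = -m := by
    have := LinearMap.congr_fun hhf w
    simp only [LinearMap.sub_apply, LinearMap.comp_apply, LinearMap.smul_apply, hw] at this
    rw [sub_eq_iff_eq_add] at this
    rw [this]; module
  have hem : e m = f p + w := by
    rw [← hw, ← hef]; simp [m, p]
  have hffp : f (f p) = 0 := by
    have := LinearMap.congr_fun hef m
    simp only [LinearMap.sub_apply, LinearMap.comp_apply, hffw, map_zero, hem, map_add, hm,
      m] at this
    simpa using this
  have hsum : ⟪f p, f p⟫_ℂ + ⟪p, p⟫_ℂ = 0 :=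
    calc ⟪f p, f p⟫_ℂ + ⟪p, p⟫_ℂ = ⟪e m, f p⟫_ℂ := by
          rw [hem, inner_add_left, ← hadj w p]
      _ = 0 := by rw [hadj, hffp, inner_zero_right]
  have hnorm : ‖f p‖ ^ 2 + ‖p‖ ^ 2 = 0 := by
    have := congrArg RCLike.re hsum
    rwa [map_add, inner_self_eq_norm_sq, inner_self_eq_norm_sq, map_zero] at this
  exact norm_eq_zero.mp (by nlinarith [norm_nonneg (f p), norm_nonneg p])

theorem inner_self_apply_eq_of_eigen_one (hef : e ∘ₗ f - f ∘ₗ e = h)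
    (hhf : h ∘ₗ f - f ∘ₗ h = (-2 : ℂ) • f) (hadj : ∀ x y, ⟪e x, y⟫_ℂ = ⟪x, f y⟫_ℂ)
    {w : V} (hw : h w = w) (hffw : f (f w) = 0) : ⟪f w, f w⟫_ℂ = ⟪w, w⟫_ℂ := by
  rw [inner_self_apply_eq_of_eigen hef hadj (c := 1) (by simpa using hw),
    apply_eq_zero_of_eigen_one hef hhf hadj hw hffw]
  simp

end UnitarySL2

theorem stmt12_general {r : ℕ} (A : Fin r → Fin r → ℤ) (hA : ∀ i, A i i = 2)
    {V : Type*} [NormedAddCommGroup V] [InnerProductSpace ℂ V]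
    (Ep Em H : Fin r → (V →ₗ[ℂ] V))
    (hEpEm : ∀ i j, Ep i ∘ₗ Em j - Em j ∘ₗ Ep i = if i = j then H i else 0)
    (hHEm : ∀ i j, H i ∘ₗ Em j - Em j ∘ₗ H i = (-(A j i) : ℂ) • Em j)
    (hadj : ∀ i (x y : V), (inner ℂ (Ep i x) y : ℂ) = inner ℂ x (Em i y))
    (lam : Fin r → ℤ) (Λ : V)
    (hΛnorm : (inner ℂ Λ Λ : ℂ) = 1)
    (hHΛ : ∀ i, H i Λ = (lam i : ℂ) • Λ)
    (hmin : ∀ L : List (Fin r), L.foldr (fun j y => Em j y) Λ ≠ 0 →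
        ∀ i, (lam i - (L.map (fun j => A j i)).sum) ∈ ({-1, 0, 1} : Set ℤ))
    (L : List (Fin r)) (hL : L.foldr (fun j y => Em j y) Λ ≠ 0) :
    (inner ℂ (L.foldr (fun j y => Em j y) Λ) (L.foldr (fun j y => Em j y) Λ) : ℂ) = 1 := by
  induction L with
  | nil => simpa using hΛnorm
  | cons i t ih =>
    set w := t.foldr (fun j y => Em j y) Λ
    have hfw : Em i w ≠ 0 := by simpa using hL
    have hw : w ≠ 0 := fun h => hfw (by rw [h, map_zero])
    have hmin_w := hmin t hw i
    have hmin_fw := hmin (i :: t) hL i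
    simp only [List.map_cons, List.sum_cons, hA, Set.mem_insert_iff,
      Set.mem_singleton_iff] at hmin_w hmin_fw
    have hweight : lam i - (t.map (fun j => A j i)).sum = 1 := by omega
    have hffw : Em i (Em i w) = 0 := by
      by_contra hffw
      have := hmin (i :: i :: t) (by simpa using hffw) i
      simp only [List.map_cons, List.sum_cons, hA, Set.mem_insert_iff,
        Set.mem_singleton_iff] at this
      omega
    have hHw : H i w = w := by
      rw [apply_foldr_eq_smul_of_commutator (H i) Em (fun j => (A j i : ℂ))
        (fun j => by simpa using hHEm i j) (hHΛ i)]
      have : (lam i : ℂ) - (t.map (fun j => (A j i : ℂ))).sum = 1 := by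
        have h := congrArg (Int.cast : ℤ → ℂ) hweight
        push_cast [List.map_map] at h
        exact h
      rw [this, one_smul]
    rw [List.foldr_cons, inner_self_apply_eq_of_eigen_one (by simpa using hEpEm i i)
      (by simpa [hA] using hHEm i i) (hadj i) hHw hffw]
    exact ih hw

theorem stmt12 {r : ℕ} (A : Fin r → Fin r → ℤ) (hA : ∀ i, A i i = 2)
    {V : Type*} [NormedAddCommGroup V] [InnerProductSpace ℂ V]
    (Ep Em H : Fin r → (V →ₗ[ℂ] V))
    (hEpEm : ∀ i j, Ep i ∘ₗ Em j - Em j ∘ₗ Ep i = if i = j then H i else 0)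
    (hHEp : ∀ i j, H i ∘ₗ Ep j - Ep j ∘ₗ H i = (A j i : ℂ) • Ep j)
    (hHEm : ∀ i j, H i ∘ₗ Em j - Em j ∘ₗ H i = (-(A j i) : ℂ) • Em j)
    (hHH : ∀ i j, H i ∘ₗ H j - H j ∘ₗ H i = 0)
    (hadj : ∀ i (x y : V), (inner ℂ (Ep i x) y : ℂ) = inner ℂ x (Em i y))
    (lam : Fin r → ℤ) (Λ : V)
    (hΛnorm : (inner ℂ Λ Λ : ℂ) = 1)
    (hEpΛ : ∀ i, Ep i Λ = 0)
    (hHΛ : ∀ i, H i Λ = (lam i : ℂ) • Λ)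
    (hmin : ∀ L : List (Fin r), L.foldr (fun j y => Em j y) Λ ≠ 0 →
        ∀ i, (lam i - (L.map (fun j => A j i)).sum) ∈ ({-1, 0, 1} : Set ℤ))
    (L : List (Fin r)) (hL : L.foldr (fun j y => Em j y) Λ ≠ 0) :
    (inner ℂ (L.foldr (fun j y => Em j y) Λ) (L.foldr (fun j y => Em j y) Λ) : ℂ) = 1 :=
  stmt12_general A hA Ep Em H hEpEm hHEm hadj lam Λ hΛnorm hHΛ hmin L hL
end

section
/- Minuscule contraction lemma (step (m2) in the proof of Theorem 4.2): Assume the minuscule hypothesis. Let i ∈ Fin r and let L be a list over Fin r such that E⁺ i (v(L)) = 0 and v(i :: L) ≠ 0 (i.e. E⁻ i (v(L)) ≠ 0). Then E⁺ i (v(i :: L)) = v(L); equivalently, E⁺ i (E⁻ i (v(L))) = v(L). -/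
/-!
The `H i`-eigenvalue `c` of `v = v(L)` drops by `A i i = 2` under `E⁻ i`, and `v(i :: L) = E⁻ i v`
is nonzero, so both `c` and `c - 2` lie in `{-1, 0, 1}`; hence `c = 1`. Since `E⁺ i v = 0`, the
relation `[E⁺ i, E⁻ i] = H i` gives `E⁺ i (E⁻ i v) = H i v = c • v = v`.
-/

section

variable {R M : Type*} [CommRing R] [AddCommGroup M] [Module R M]

theorem LinearMap.apply_eigenvector_of_comm_sub_eq_smul {H E : M →ₗ[R] M} {c μ : R}
    (hHE : H ∘ₗ E - E ∘ₗ H = c • E) {v : M} (hv : H v = μ • v) :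
    H (E v) = (μ + c) • E v := by
  have h := LinearMap.congr_fun hHE v
  simp only [LinearMap.sub_apply, LinearMap.comp_apply, LinearMap.smul_apply, hv,
    map_smul] at h
  linear_combination (norm := module) h

theorem LinearMap.apply_apply_of_comm_sub_eq {Ep Em H : M →ₗ[R] M}
    (hEpEm : Ep ∘ₗ Em - Em ∘ₗ Ep = H) {v : M} (hEpv : Ep v = 0) {μ : R} (hv : H v = μ • v) :
    Ep (Em v) = μ • v := by
  have h := LinearMap.congr_fun hEpEm v
  simp only [LinearMap.sub_apply, LinearMap.comp_apply, hEpv, map_zero, sub_zero] at h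
  rw [h, hv]

theorem apply_foldr_lowering_eq_smul {ι : Type*} (A : ι → ι → ℤ) (Em H : ι → (M →ₗ[R] M))
    (hHEm : ∀ i j, H i ∘ₗ Em j - Em j ∘ₗ H i = (-(A j i) : R) • Em j)
    (lam : ι → ℤ) {Λ : M} (hHΛ : ∀ i, H i Λ = (lam i : R) • Λ) (L : List ι) (k : ι) :
    H k (L.foldr (fun j y => Em j y) Λ) =
      ((lam k - (L.map (fun j => A j k)).sum : ℤ) : R) • L.foldr (fun j y => Em j y) Λ := by
  induction L with
  | nil => simpa using hHΛ k
  | cons j T ih =>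
    rw [List.foldr_cons, LinearMap.apply_eigenvector_of_comm_sub_eq_smul (hHEm k j) ih]
    push_cast [List.map_cons, List.sum_cons]
    ring_nf

end

theorem stmt13_general {r : ℕ} (A : Fin r → Fin r → ℤ) (hA : ∀ i, A i i = 2)
    {V : Type*} [NormedAddCommGroup V] [InnerProductSpace ℂ V]
    (Ep Em H : Fin r → (V →ₗ[ℂ] V))
    (hEpEm : ∀ i j, Ep i ∘ₗ Em j - Em j ∘ₗ Ep i = if i = j then H i else 0)
    (hHEm : ∀ i j, H i ∘ₗ Em j - Em j ∘ₗ H i = (-(A j i) : ℂ) • Em j)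
    (lam : Fin r → ℤ) (Λ : V)
    (hHΛ : ∀ i, H i Λ = (lam i : ℂ) • Λ)
    (hmin : ∀ L : List (Fin r), L.foldr (fun j y => Em j y) Λ ≠ 0 →
        ∀ i, (lam i - (L.map (fun j => A j i)).sum) ∈ ({-1, 0, 1} : Set ℤ))
    (i : Fin r) (L : List (Fin r))
    (h0 : Ep i (L.foldr (fun j y => Em j y) Λ) = 0)
    (hne : ((i :: L) : List (Fin r)).foldr (fun j y => Em j y) Λ ≠ 0) :
    Ep i (((i :: L) : List (Fin r)).foldr (fun j y => Em j y) Λ) =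
      L.foldr (fun j y => Em j y) Λ := by
  have hv : L.foldr (fun j y => Em j y) Λ ≠ 0 := fun h => hne (by simp [h])
  have hweight : lam i - (L.map (fun j => A j i)).sum = 1 := by
    have hL := hmin L hv i
    have hiL := hmin (i :: L) hne i
    simp only [List.map_cons, List.sum_cons, hA, Set.mem_insert_iff,
      Set.mem_singleton_iff] at hL hiL
    omega
  have hEpEmi : Ep i ∘ₗ Em i - Em i ∘ₗ Ep i = H i := by simpa using hEpEm i i
  rw [List.foldr_cons, LinearMap.apply_apply_of_comm_sub_eq hEpEmi h0
    (apply_foldr_lowering_eq_smul A Em H hHEm lam hHΛ L i), hweight, Int.cast_one, one_smul]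

theorem stmt13 {r : ℕ} (A : Fin r → Fin r → ℤ) (hA : ∀ i, A i i = 2)
    {V : Type*} [NormedAddCommGroup V] [InnerProductSpace ℂ V]
    (Ep Em H : Fin r → (V →ₗ[ℂ] V))
    (hEpEm : ∀ i j, Ep i ∘ₗ Em j - Em j ∘ₗ Ep i = if i = j then H i else 0)
    (hHEp : ∀ i j, H i ∘ₗ Ep j - Ep j ∘ₗ H i = (A j i : ℂ) • Ep j)
    (hHEm : ∀ i j, H i ∘ₗ Em j - Em j ∘ₗ H i = (-(A j i) : ℂ) • Em j)
    (hHH : ∀ i j, H i ∘ₗ H j - H j ∘ₗ H i = 0)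
    (hadj : ∀ i (x y : V), (inner ℂ (Ep i x) y : ℂ) = inner ℂ x (Em i y))
    (lam : Fin r → ℤ) (Λ : V)
    (hΛnorm : (inner ℂ Λ Λ : ℂ) = 1)
    (hEpΛ : ∀ i, Ep i Λ = 0)
    (hHΛ : ∀ i, H i Λ = (lam i : ℂ) • Λ)
    (hmin : ∀ L : List (Fin r), L.foldr (fun j y => Em j y) Λ ≠ 0 →
        ∀ i, (lam i - (L.map (fun j => A j i)).sum) ∈ ({-1, 0, 1} : Set ℤ))
    (i : Fin r) (L : List (Fin r))
    (h0 : Ep i (L.foldr (fun j y => Em j y) Λ) = 0)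
    (hne : ((i :: L) : List (Fin r)).foldr (fun j y => Em j y) Λ ≠ 0) :
    Ep i (((i :: L) : List (Fin r)).foldr (fun j y => Em j y) Λ) =
      L.foldr (fun j y => Em j y) Λ :=
  stmt13_general A hA Ep Em H hEpEm hHEm lam Λ hHΛ hmin i L h0 hne
end

section
/- G₂ computation (Appendix A, the state of weight (−1,1)): In the G₂ specialization, ⟪v([0, 0, 1]), v([0, 0, 1])⟫ = 12; that is, the state E⁻₁E⁻₁E⁻₂Λ of level 3 has squared norm 12. -/
/-!
Since `A i i = 2`, each `(H i, Ep i, Em i)` is an `sl₂`-triple, and for a primitive vector `v` of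
weight `μ` the string formula `e f^{n+1} v = (n+1)(μ-n) f^n v` together with the adjointness of
`e` and `f` gives `‖f^{n+1} v‖² = (n+1)(μ-n) ‖f^n v‖²`. The vector `Λ` is primitive of weight
`λ 1 = 1` for the second triple, so `‖E⁻₂Λ‖² = 1`; then `E⁻₂Λ` is primitive of weight
`λ 0 - A 1 0 = 3` for the first triple, so `‖E⁻₁E⁻₂Λ‖² = 1 · 3` and `‖E⁻₁E⁻₁E⁻₂Λ‖² = 2 · 2 · 3`.
-/

open LieModule

attribute [local instance] LieRing.ofAssociativeRing

section Commutator

variable {R V : Type*} [CommRing R] [AddCommGroup V] [Module R V]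

theorem LinearMap.apply_apply_eq_smul_of_comp_sub_comp {a b : Module.End R V} {c μ : R} {v : V}
    (hab : a ∘ₗ b - b ∘ₗ a = c • b) (hv : a v = μ • v) : a (b v) = (μ + c) • b v := by
  have h := LinearMap.congr_fun hab v
  simp only [LinearMap.sub_apply, LinearMap.comp_apply, LinearMap.smul_apply, hv,
    map_smul] at h
  rw [add_smul, ← h, add_sub_cancel]

theorem IsSl2Triple.of_comp_sub_comp {h e f : Module.End R V} (hh : h ≠ 0)
    (hef : e ∘ₗ f - f ∘ₗ e = h) (hhe : h ∘ₗ e - e ∘ₗ h = (2 : R) • e)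
    (hhf : h ∘ₗ f - f ∘ₗ h = (-2 : R) • f) : IsSl2Triple h e f where
  h_ne_zero := hh
  lie_e_f := hef
  lie_h_e_nsmul := by rw [← ofNat_smul_eq_nsmul (R := R)]; exact hhe
  lie_h_f_nsmul := by rw [← ofNat_smul_eq_nsmul (R := R), ← neg_smul]; exact hhf

end Commutator

theorem IsSl2Triple.HasPrimitiveVectorWith.inner_pow_succ_self {𝕜 V : Type*} [RCLike 𝕜]
    [NormedAddCommGroup V] [InnerProductSpace 𝕜 V] {h e f : Module.End 𝕜 V}
    {t : IsSl2Triple h e f} {v : V} {μ : 𝕜} (P : t.HasPrimitiveVectorWith v μ)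
    (hadj : ∀ x y : V, inner 𝕜 (e x) y = inner 𝕜 x (f y)) (n : ℕ) :
    inner 𝕜 ((f ^ (n + 1)) v) ((f ^ (n + 1)) v)
      = ((n + 1) * (μ - n)) * inner 𝕜 ((f ^ n) v) ((f ^ n) v) := by
  have hadj' : ∀ x y : V, inner 𝕜 (f x) y = inner 𝕜 x (e y) := fun x y => by
    rw [← inner_conj_symm, ← hadj, inner_conj_symm]
  have hstring := P.lie_e_pow_succ_toEnd_f n
  simp only [toEnd_module_end, LieHom.id_apply, Module.End.lie_apply] at hstring
  calc inner 𝕜 ((f ^ (n + 1)) v) ((f ^ (n + 1)) v)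
      = inner 𝕜 ((f ^ n) v) (e ((f ^ (n + 1)) v)) := by
        rw [← hadj', pow_succ', Module.End.mul_apply]
    _ = _ := by rw [hstring, inner_smul_right]

section Chevalley

variable {ι K V : Type*} [DecidableEq ι] [Field K] [AddCommGroup V] [Module K V]
  {A : ι → ι → ℤ} {Ep Em H : ι → Module.End K V}

theorem exists_hasPrimitiveVectorWith_of_chevalley
    (hEpEm : ∀ i j, Ep i ∘ₗ Em j - Em j ∘ₗ Ep i = if i = j then H i else 0)
    (hHEp : ∀ i j, H i ∘ₗ Ep j - Ep j ∘ₗ H i = (A j i : K) • Ep j)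
    (hHEm : ∀ i j, H i ∘ₗ Em j - Em j ∘ₗ H i = (-(A j i) : K) • Em j)
    {i : ι} (hA : A i i = 2) {v : V} {μ : K} (hv : v ≠ 0) (hμ : μ ≠ 0) (hEp : Ep i v = 0)
    (hH : H i v = μ • v) :
    ∃ t : IsSl2Triple (H i) (Ep i) (Em i), t.HasPrimitiveVectorWith v μ := by
  have hH0 : H i ≠ 0 := fun h0 => smul_ne_zero hμ hv (by simpa [h0] using hH.symm)
  exact ⟨.of_comp_sub_comp hH0 (by simpa using hEpEm i i) (by simpa [hA] using hHEp i i)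
    (by simpa [hA] using hHEm i i), hv, hH, hEp⟩

end Chevalley

theorem stmt14_general {V : Type*} [NormedAddCommGroup V] [InnerProductSpace ℂ V]
    (A : Fin 2 → Fin 2 → ℤ)
    (hA00 : A 0 0 = 2) (hA10 : A 1 0 = -3) (hA11 : A 1 1 = 2)
    (Ep Em H : Fin 2 → (V →ₗ[ℂ] V))
    (hEpEm : ∀ i j, Ep i ∘ₗ Em j - Em j ∘ₗ Ep i = if i = j then H i else 0)
    (hHEp : ∀ i j, H i ∘ₗ Ep j - Ep j ∘ₗ H i = (A j i : ℂ) • Ep j)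
    (hHEm : ∀ i j, H i ∘ₗ Em j - Em j ∘ₗ H i = (-(A j i) : ℂ) • Em j)
    (hadj : ∀ i (x y : V), (inner ℂ (Ep i x) y : ℂ) = inner ℂ x (Em i y))
    (lam : Fin 2 → ℤ) (hlam0 : lam 0 = 0) (hlam1 : lam 1 = 1)
    (Λ : V)
    (hΛnorm : (inner ℂ Λ Λ : ℂ) = 1)
    (hEpΛ : ∀ i, Ep i Λ = 0)
    (hHΛ : ∀ i, H i Λ = (lam i : ℂ) • Λ) :
    (inner ℂ (([0, 0, 1] : List (Fin 2)).foldr (fun j y => Em j y) Λ)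
        (([0, 0, 1] : List (Fin 2)).foldr (fun j y => Em j y) Λ) : ℂ) = 12 := by
  have hΛ : Λ ≠ 0 := by rintro rfl; simp at hΛnorm
  obtain ⟨t1, P1⟩ := exists_hasPrimitiveVectorWith_of_chevalley hEpEm hHEp hHEm hA11 hΛ
    one_ne_zero (hEpΛ 1) (by simp [hHΛ, hlam1])
  have hnorm1 : inner ℂ (Em 1 Λ) (Em 1 Λ) = (1 : ℂ) := by
    simpa only [zero_add, pow_one, pow_zero, Module.End.one_apply, Nat.cast_zero, sub_zero,
      mul_one, hΛnorm] using P1.inner_pow_succ_self (hadj 1) 0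
  have hv1 : Em 1 Λ ≠ 0 := by rintro h; simp [h] at hnorm1
  have hEp0v1 : Ep 0 (Em 1 Λ) = 0 := by
    simpa [hEpΛ] using LinearMap.congr_fun (hEpEm 0 1) Λ
  have hH0v1 : H 0 (Em 1 Λ) = (3 : ℂ) • Em 1 Λ := by
    rw [LinearMap.apply_apply_eq_smul_of_comp_sub_comp (hHEm 0 1) (hHΛ 0), hlam0, hA10]
    norm_num
  obtain ⟨t0, P0⟩ := exists_hasPrimitiveVectorWith_of_chevalley hEpEm hHEp hHEm hA00 hv1
    three_ne_zero hEp0v1 hH0v1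
  have hnorm2 : inner ℂ (Em 0 (Em 1 Λ)) (Em 0 (Em 1 Λ)) = (3 : ℂ) := by
    simpa only [zero_add, pow_one, pow_zero, Module.End.one_apply, Nat.cast_zero, sub_zero,
      one_mul, mul_one, hnorm1] using P0.inner_pow_succ_self (hadj 0) 0
  have hnorm3 := P0.inner_pow_succ_self (hadj 0) 1
  simp only [pow_succ, pow_zero, one_mul, Module.End.mul_apply, Nat.cast_one, hnorm2] at hnorm3
  simp only [List.foldr, hnorm3]
  norm_num

theorem stmt14 {V : Type*} [NormedAddCommGroup V] [InnerProductSpace ℂ V]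
    (A : Fin 2 → Fin 2 → ℤ)
    (hA00 : A 0 0 = 2) (hA01 : A 0 1 = -1) (hA10 : A 1 0 = -3) (hA11 : A 1 1 = 2)
    (Ep Em H : Fin 2 → (V →ₗ[ℂ] V))
    (hEpEm : ∀ i j, Ep i ∘ₗ Em j - Em j ∘ₗ Ep i = if i = j then H i else 0)
    (hHEp : ∀ i j, H i ∘ₗ Ep j - Ep j ∘ₗ H i = (A j i : ℂ) • Ep j)
    (hHEm : ∀ i j, H i ∘ₗ Em j - Em j ∘ₗ H i = (-(A j i) : ℂ) • Em j)
    (hHH : ∀ i j, H i ∘ₗ H j - H j ∘ₗ H i = 0)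
    (hadj : ∀ i (x y : V), (inner ℂ (Ep i x) y : ℂ) = inner ℂ x (Em i y))
    (lam : Fin 2 → ℤ) (hlam0 : lam 0 = 0) (hlam1 : lam 1 = 1)
    (Λ : V)
    (hΛnorm : (inner ℂ Λ Λ : ℂ) = 1)
    (hEpΛ : ∀ i, Ep i Λ = 0)
    (hHΛ : ∀ i, H i Λ = (lam i : ℂ) • Λ) :
    (inner ℂ (([0, 0, 1] : List (Fin 2)).foldr (fun j y => Em j y) Λ)
        (([0, 0, 1] : List (Fin 2)).foldr (fun j y => Em j y) Λ) : ℂ) = 12 :=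
  stmt14_general A hA00 hA10 hA11 Ep Em H hEpEm hHEp hHEm hadj lam hlam0 hlam1 Λ hΛnorm hEpΛ hHΛ
end

section
/- G₂ computation (Appendix A, the state of weight (−3,2)): In the G₂ specialization, ⟪v([0, 0, 0, 1]), v([0, 0, 0, 1])⟫ = 36; that is, the state E⁻₁E⁻₁E⁻₁E⁻₂Λ of level 4 has squared norm 36. -/
/-! The vector `E⁻₂Λ` is annihilated by `E⁺₁` and has `H₁`-weight `3`, so it is a highest-weight
vector for the `sl₂` of the first simple root. In an `sl₂`-string from a primitive vector `v` of
weight `m`, `E⁺ (E⁻^[k+1] v) = (k+1)(m-k) E⁻^[k] v`, and adjointness turns this into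
`‖E⁻^[k+1] v‖² = (k+1)(m-k) ‖E⁻^[k] v‖²`. Hence `‖E⁻₂Λ‖² = 1` and
`‖E⁻₁³E⁻₂Λ‖² = (1·3)(2·2)(3·1) = 36`. -/

namespace Chevalley

open Finset

variable {ι V : Type*} [NormedAddCommGroup V] [InnerProductSpace ℂ V]
  {A : ι → ι → ℤ} {Ep Em H : ι → (V →ₗ[ℂ] V)}

theorem Ep_Em_apply [DecidableEq ι]
    (hEpEm : ∀ i j, Ep i ∘ₗ Em j - Em j ∘ₗ Ep i = if i = j then H i else 0) (i j : ι) (v : V) :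
    Ep i (Em j v) = Em j (Ep i v) + if i = j then H i v else 0 := by
  have h := LinearMap.congr_fun (hEpEm i j) v
  split_ifs at h ⊢ <;>
    simp only [LinearMap.sub_apply, LinearMap.comp_apply, LinearMap.zero_apply] at h <;>
    exact eq_add_of_sub_eq' h

theorem H_Em_apply_of_eigen
    (hHEm : ∀ i j, H i ∘ₗ Em j - Em j ∘ₗ H i = (-(A j i) : ℂ) • Em j)
    {i : ι} {v : V} {m : ℤ} (hv : H i v = (m : ℂ) • v) (j : ι) :
    H i (Em j v) = ((m - A j i : ℤ) : ℂ) • Em j v := by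
  have h := LinearMap.congr_fun (hHEm i j) v
  simp only [LinearMap.sub_apply, LinearMap.comp_apply, LinearMap.smul_apply, hv,
    map_smul] at h
  rw [eq_add_of_sub_eq' h]
  push_cast
  module

theorem H_iterate_Em_apply
    (hHEm : ∀ i j, H i ∘ₗ Em j - Em j ∘ₗ H i = (-(A j i) : ℂ) • Em j)
    {i : ι} (hAii : A i i = 2) {v : V} {m : ℤ} (hv : H i v = (m : ℂ) • v) (k : ℕ) :
    H i ((Em i)^[k] v) = ((m - 2 * k : ℤ) : ℂ) • (Em i)^[k] v := by
  induction k with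
  | zero => simpa using hv
  | succ k ih =>
    rw [Function.iterate_succ_apply', H_Em_apply_of_eigen hHEm ih, hAii]
    congr 2
    push_cast
    ring

theorem Ep_iterate_Em_apply [DecidableEq ι]
    (hEpEm : ∀ i j, Ep i ∘ₗ Em j - Em j ∘ₗ Ep i = if i = j then H i else 0)
    (hHEm : ∀ i j, H i ∘ₗ Em j - Em j ∘ₗ H i = (-(A j i) : ℂ) • Em j)
    {i : ι} (hAii : A i i = 2) {v : V} {m : ℤ} (hEv : Ep i v = 0)
    (hHv : H i v = (m : ℂ) • v) (k : ℕ) :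
    Ep i (Em i ((Em i)^[k] v)) = (((k + 1) * (m - k) : ℤ) : ℂ) • (Em i)^[k] v := by
  induction k with
  | zero => simp [Ep_Em_apply hEpEm, hEv, hHv]
  | succ k ih =>
    rw [Ep_Em_apply hEpEm, if_pos rfl, H_iterate_Em_apply hHEm hAii hHv (k + 1),
      Function.iterate_succ_apply', ih, map_smul, ← add_smul]
    congr 1
    push_cast
    ring

theorem inner_Em_self_of_Ep_Em
    (hadj : ∀ i (x y : V), (inner ℂ (Ep i x) y : ℂ) = inner ℂ x (Em i y))
    {i : ι} {w : V} {c : ℤ} (hw : Ep i (Em i w) = (c : ℂ) • w) :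
    (inner ℂ (Em i w) (Em i w) : ℂ) = c * inner ℂ w w := by
  rw [← hadj, hw, inner_smul_left, map_intCast]

theorem inner_iterate_Em_self [DecidableEq ι]
    (hEpEm : ∀ i j, Ep i ∘ₗ Em j - Em j ∘ₗ Ep i = if i = j then H i else 0)
    (hHEm : ∀ i j, H i ∘ₗ Em j - Em j ∘ₗ H i = (-(A j i) : ℂ) • Em j)
    (hadj : ∀ i (x y : V), (inner ℂ (Ep i x) y : ℂ) = inner ℂ x (Em i y))
    {i : ι} (hAii : A i i = 2) {v : V} {m : ℤ} (hEv : Ep i v = 0)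
    (hHv : H i v = (m : ℂ) • v) (n : ℕ) :
    (inner ℂ ((Em i)^[n] v) ((Em i)^[n] v) : ℂ) =
      ((∏ k ∈ range n, (k + 1) * (m - k) : ℤ) : ℂ) * inner ℂ v v := by
  induction n with
  | zero => simp
  | succ n ih =>
    rw [Function.iterate_succ_apply',
      inner_Em_self_of_Ep_Em hadj (Ep_iterate_Em_apply hEpEm hHEm hAii hEv hHv n), ih,
      prod_range_succ]
    push_cast
    ring

end Chevalley

open Chevalley in
theorem stmt15_general {V : Type*} [NormedAddCommGroup V] [InnerProductSpace ℂ V]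
    (A : Fin 2 → Fin 2 → ℤ)
    (hA00 : A 0 0 = 2) (hA10 : A 1 0 = -3)
    (Ep Em H : Fin 2 → (V →ₗ[ℂ] V))
    (hEpEm : ∀ i j, Ep i ∘ₗ Em j - Em j ∘ₗ Ep i = if i = j then H i else 0)
    (hHEm : ∀ i j, H i ∘ₗ Em j - Em j ∘ₗ H i = (-(A j i) : ℂ) • Em j)
    (hadj : ∀ i (x y : V), (inner ℂ (Ep i x) y : ℂ) = inner ℂ x (Em i y))
    (lam : Fin 2 → ℤ) (hlam0 : lam 0 = 0) (hlam1 : lam 1 = 1)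
    (Λ : V)
    (hΛnorm : (inner ℂ Λ Λ : ℂ) = 1)
    (hEpΛ : ∀ i, Ep i Λ = 0)
    (hHΛ : ∀ i, H i Λ = (lam i : ℂ) • Λ) :
    (inner ℂ (([0, 0, 0, 1] : List (Fin 2)).foldr (fun j y => Em j y) Λ)
        (([0, 0, 0, 1] : List (Fin 2)).foldr (fun j y => Em j y) Λ) : ℂ) = 36 := by
  have hEpw : Ep 0 (Em 1 Λ) = 0 := by simp [Ep_Em_apply hEpEm, hEpΛ]
  have hHw : H 0 (Em 1 Λ) = ((3 : ℤ) : ℂ) • Em 1 Λ := by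
    rw [H_Em_apply_of_eigen hHEm (m := 0) (by simp [hHΛ, hlam0]), hA10]
    norm_num
  have hnorm_w : (inner ℂ (Em 1 Λ) (Em 1 Λ) : ℂ) = 1 := by
    rw [inner_Em_self_of_Ep_Em hadj (c := 1) (by simp [Ep_Em_apply hEpEm, hEpΛ, hHΛ, hlam1]),
      hΛnorm]
    norm_num
  change (inner ℂ ((Em 0)^[3] (Em 1 Λ)) ((Em 0)^[3] (Em 1 Λ)) : ℂ) = 36
  rw [inner_iterate_Em_self hEpEm hHEm hadj hA00 hEpw hHw, hnorm_w]
  simp [Finset.prod_range_succ]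

theorem stmt15 {V : Type*} [NormedAddCommGroup V] [InnerProductSpace ℂ V]
    (A : Fin 2 → Fin 2 → ℤ)
    (hA00 : A 0 0 = 2) (hA01 : A 0 1 = -1) (hA10 : A 1 0 = -3) (hA11 : A 1 1 = 2)
    (Ep Em H : Fin 2 → (V →ₗ[ℂ] V))
    (hEpEm : ∀ i j, Ep i ∘ₗ Em j - Em j ∘ₗ Ep i = if i = j then H i else 0)
    (hHEp : ∀ i j, H i ∘ₗ Ep j - Ep j ∘ₗ H i = (A j i : ℂ) • Ep j)
    (hHEm : ∀ i j, H i ∘ₗ Em j - Em j ∘ₗ H i = (-(A j i) : ℂ) • Em j)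
    (hHH : ∀ i j, H i ∘ₗ H j - H j ∘ₗ H i = 0)
    (hadj : ∀ i (x y : V), (inner ℂ (Ep i x) y : ℂ) = inner ℂ x (Em i y))
    (lam : Fin 2 → ℤ) (hlam0 : lam 0 = 0) (hlam1 : lam 1 = 1)
    (Λ : V)
    (hΛnorm : (inner ℂ Λ Λ : ℂ) = 1)
    (hEpΛ : ∀ i, Ep i Λ = 0)
    (hHΛ : ∀ i, H i Λ = (lam i : ℂ) • Λ) :
    (inner ℂ (([0, 0, 0, 1] : List (Fin 2)).foldr (fun j y => Em j y) Λ)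
        (([0, 0, 0, 1] : List (Fin 2)).foldr (fun j y => Em j y) Λ) : ℂ) = 36 :=
  stmt15_general A hA00 hA10 Ep Em H hEpEm hHEm hadj lam hlam0 hlam1 Λ hΛnorm hEpΛ hHΛ
end
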